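/- arXiv:0711.1740 — 14 statements merged into one kernel-verified Lean document; each statement's English description precedes it below -/
import Mathlib

section
/- Let {P_n}_{n≥0} be a sequence of monic real polynomials with P_0 = 1, P_1(x) = x − β_0 and x·P_n(x) = P_{n+1}(x) + β_n·P_n(x) + γ_n·P_{n−1}(x) for all n ≥ 1, with γ_n ≠ 0 for all n ≥ 1. Let k ≥ 1, let a_1,…,a_k be real numbers with a_k ≠ 0, and let {Q_n}_{n≥0} be monic polynomials with deg Q_n = n such that Q_n = P_n + a_1·P_{n−1} + … + a_k·P_{n−k} for all n ≥ k+1. If {Q_n} satisfies a three-term recurrence x·Q_n(x) = Q_{n+1}(x) + β̃_n·Q_n(x) + γ̃_n·Q_{n−1}(x) for all n ≥ 1 with γ̃_n ≠ 0, then for every n ≥ k+2: γ_n + a_1·(β_{n−1} − β_n) = γ_{n−k}, and a_{j−1}·(γ_{n−k} − γ_{n−j+1}) = a_j·(β_{n−j} − β_n) for every j with 2 ≤ j ≤ k. -/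
open Polynomial Finset

/-! Write `Q_n = ∑_{j ≤ k} b_j P_{n-j}` with `b_0 = 1`, `b_j = a_j`. Expanding `X Q_n` through the
recurrence of `P` and subtracting the recurrence of `Q` leaves a vanishing combination of
`P_n, …, P_{n-k-1}`. These have distinct degrees, hence are linearly independent, so every
coefficient vanishes: the one of `P_n` gives `β̃_n = β_n`, the one of `P_{n-k-1}` gives
`γ̃_n = γ_{n-k}` (as `a_k ≠ 0`), and those of `P_{n-j}`, `1 ≤ j ≤ k`, are the stated relations. -/

section ThreeTerm

variable {R : Type*} [CommRing R]

theorem natDegree_eq_of_threeTermRecurrence [Nontrivial R] {P : ℕ → R[X]} {β γ : ℕ → R}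
    (hmonic : ∀ n, (P n).Monic) (h0 : P 0 = 1) (h1 : P 1 = X - C (β 0))
    (hrec : ∀ n, 1 ≤ n → X * P n = P (n + 1) + C (β n) * P n + C (γ n) * P (n - 1)) (n : ℕ) :
    (P n).natDegree = n := by
  induction n using Nat.twoStepInduction with
  | zero => simp [h0]
  | one => rw [h1, natDegree_X_sub_C]
  | more m ih₀ ih₁ =>
    have hXP : (X * P (m + 1)).natDegree = m + 2 := by
      rw [monic_X.natDegree_mul (hmonic _), natDegree_X, ih₁, add_comm]
    have hlower : (C (β (m + 1)) * P (m + 1) + C (γ (m + 1)) * P m).natDegree < m + 2 := by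
      refine (natDegree_add_le _ _).trans_lt (max_lt ?_ ?_)
      · exact (natDegree_C_mul_le _ _).trans_lt (by omega)
      · exact (natDegree_C_mul_le _ _).trans_lt (by omega)
    have hnext :
        P (m + 2) = X * P (m + 1) - (C (β (m + 1)) * P (m + 1) + C (γ (m + 1)) * P m) := by
      rw [hrec (m + 1) (by omega), Nat.add_sub_cancel]; ring
    rw [hnext, natDegree_sub_eq_left_of_natDegree_lt (hXP ▸ hlower), hXP]

theorem eq_zero_of_sum_C_mul_sub_eq_zero [IsDomain R] {P : ℕ → R[X]}
    (hdeg : ∀ i, (P i).degree = i) {c : ℕ → R} {n M : ℕ} (hM : M ≤ n + 1)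
    (h : ∑ m ∈ range M, C (c m) * P (n - m) = 0) :
    ∀ m < M, c m = 0 := by
  intro m hm
  have hinj : Set.InjOn (n - ·) (range M : Set ℕ) := fun i hi j hj hij => by
    simp only [coe_range, Set.mem_Iio] at hi hj
    simp only at hij
    omega
  have hsum : ∑ i ∈ (range M).image (n - ·), c (n - i) • P i = 0 := by
    rw [sum_image hinj, ← h]
    refine sum_congr rfl fun i hi => ?_
    rw [smul_eq_C_mul, Nat.sub_sub_self (by simp at hi; omega)]
  have := linearIndependent_iff'.mp (Sequence.linearIndependent ⟨P, hdeg⟩) _ _ hsum (n - m)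
    (mem_image_of_mem _ (mem_range.mpr hm))
  rwa [Nat.sub_sub_self (by omega)] at this

theorem eq_zero_of_sum_C_mul_add_shift_eq_zero [IsDomain R] {P : ℕ → R[X]}
    (hdeg : ∀ i, (P i).degree = i) {u v : ℕ → R} {n K : ℕ} (hK : K + 1 ≤ n)
    (h : ∑ j ∈ range (K + 1), (C (u j) * P (n - j) + C (v j) * P (n - (j + 1))) = 0) :
    u 0 = 0 ∧ (∀ j < K, u (j + 1) + v j = 0) ∧ v K = 0 := by
  -- `c m` is the coefficient of `P (n - m)` in `h`
  set c : ℕ → R := fun m => if m = 0 then u 0 else if m = K + 1 then v K else u m + v (m - 1)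
  have hc : ∑ m ∈ range (K + 2), C (c m) * P (n - m) = 0 := by
    rw [← h, sum_add_distrib, sum_range_succ' (fun j => C (u j) * _),
      sum_range_succ (fun j => C (v j) * _), sum_range_succ, sum_range_succ']
    have hmid : ∑ j ∈ range K, C (c (j + 1)) * P (n - (j + 1)) =
        ∑ j ∈ range K, (C (u (j + 1)) * P (n - (j + 1)) + C (v j) * P (n - (j + 1))) :=
      sum_congr rfl fun j hj => by
        simp [c, (mem_range.mp hj).ne, C_add, add_mul]
    simp only [hmid, sum_add_distrib, c, if_pos, if_neg (Nat.succ_ne_zero K)]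
    ring
  have hzero := eq_zero_of_sum_C_mul_sub_eq_zero hdeg (by omega) hc
  refine ⟨by simpa [c] using hzero 0 (by omega), fun j hj => ?_, ?_⟩
  · simpa [c, hj.ne] using hzero (j + 1) (by omega)
  · simpa [c] using hzero (K + 1) (by omega)

theorem sum_defect_eq_zero_of_threeTermRecurrence {P Q : ℕ → R[X]} {β γ βt γt b : ℕ → R}
    {K n : ℕ} (hn : K + 2 ≤ n)
    (hPrec : ∀ i, 1 ≤ i → X * P i = P (i + 1) + C (β i) * P i + C (γ i) * P (i - 1))
    (hQ : ∀ m, K + 1 ≤ m → Q m = ∑ j ∈ range (K + 1), C (b j) * P (m - j))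
    (hQrec : X * Q n = Q (n + 1) + C (βt n) * Q n + C (γt n) * Q (n - 1)) :
    ∑ j ∈ range (K + 1), (C (b j * (β (n - j) - βt n)) * P (n - j)
      + C (b j * (γ (n - j) - γt n)) * P (n - (j + 1))) = 0 := by
  have hXQ : X * Q n = ∑ j ∈ range (K + 1), C (b j) *
      (P (n - j + 1) + C (β (n - j)) * P (n - j) + C (γ (n - j)) * P (n - (j + 1))) := by
    rw [hQ n (by omega), mul_sum]
    refine sum_congr rfl fun j hj => ?_
    rw [Nat.sub_add_eq, ← hPrec _ (by simp at hj; omega)]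
    ring
  have hrhs : Q (n + 1) + C (βt n) * Q n + C (γt n) * Q (n - 1) = ∑ j ∈ range (K + 1), C (b j) *
      (P (n - j + 1) + C (βt n) * P (n - j) + C (γt n) * P (n - (j + 1))) := by
    rw [hQ n (by omega), hQ (n + 1) (by omega), hQ (n - 1) (by omega), mul_sum, mul_sum,
      ← sum_add_distrib, ← sum_add_distrib]
    refine sum_congr rfl fun j hj => ?_
    rw [show n + 1 - j = n - j + 1 by simp at hj; omega, Nat.sub_right_comm, Nat.sub_add_eq]
    ring
  rw [← sub_eq_zero_of_eq hQrec, hXQ, hrhs, ← sum_sub_distrib]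
  refine sum_congr rfl fun j _ => ?_
  simp only [C_mul, C_sub]
  ring

end ThreeTerm

theorem stmt_0_general (P Q : ℕ → Polynomial ℝ) (β γ βt γt : ℕ → ℝ) (k : ℕ) (a : ℕ → ℝ)
    (hk : 1 ≤ k) (hak : a k ≠ 0)
    (hPmonic : ∀ n, (P n).Monic)
    (hP0 : P 0 = 1) (hP1 : P 1 = X - C (β 0))
    (hPrec : ∀ n, 1 ≤ n → X * P n = P (n + 1) + C (β n) * P n + C (γ n) * P (n - 1))
    (hQ : ∀ n, k + 1 ≤ n → Q n = P n + ∑ j ∈ Finset.Icc 1 k, C (a j) * P (n - j))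
    (hQrec : ∀ n, 1 ≤ n → X * Q n = Q (n + 1) + C (βt n) * Q n + C (γt n) * Q (n - 1)) :
    ∀ n, k + 2 ≤ n →
      γ n + a 1 * (β (n - 1) - β n) = γ (n - k) ∧
      ∀ j, 2 ≤ j → j ≤ k →
        a (j - 1) * (γ (n - k) - γ (n - j + 1)) = a j * (β (n - j) - β n) := by
  intro n hn
  set b : ℕ → ℝ := fun j => if j = 0 then 1 else a j
  have hdeg (i : ℕ) : (P i).degree = i := by
    rw [degree_eq_natDegree (hPmonic i).ne_zero,
      natDegree_eq_of_threeTermRecurrence hPmonic hP0 hP1 hPrec]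
  have hQb (m : ℕ) (hm : k + 1 ≤ m) : Q m = ∑ j ∈ range (k + 1), C (b j) * P (m - j) := by
    rw [hQ m hm, sum_range_succ', ← Ico_add_one_right_eq_Icc, sum_Ico_eq_sum_range,
      Nat.add_sub_cancel]
    simp [b, add_comm 1, add_comm (P m)]
  obtain ⟨hβt, hmid, hγt⟩ := eq_zero_of_sum_C_mul_add_shift_eq_zero hdeg (by omega)
    (sum_defect_eq_zero_of_threeTermRecurrence hn hPrec hQb (hQrec n (by omega)))
  have hβt_eq : βt n = β n := by
    simp only [b, if_pos, one_mul, Nat.sub_zero, sub_eq_zero] at hβt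
    exact hβt.symm
  have hγt_eq : γt n = γ (n - k) := by
    have hbk : b k = a k := if_neg (by omega)
    rw [hbk] at hγt
    exact (sub_eq_zero.mp ((mul_eq_zero.mp hγt).resolve_left hak)).symm
  constructor
  · have := hmid 0 (by omega)
    simp only [b, zero_add, if_pos, one_ne_zero, if_false, Nat.sub_zero, hβt_eq, hγt_eq] at this
    linarith
  · intro j hj2 hjk
    have := hmid (j - 1) (by omega)
    rw [Nat.sub_add_cancel (by omega), hβt_eq, hγt_eq,
      show n - (j - 1) = n - j + 1 by omega] at this
    simp only [b, show j ≠ 0 by omega, show j - 1 ≠ 0 by omega, if_false] at this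
    linarith

theorem stmt_0 (P Q : ℕ → Polynomial ℝ) (β γ βt γt : ℕ → ℝ) (k : ℕ) (a : ℕ → ℝ)
    (hk : 1 ≤ k) (hak : a k ≠ 0)
    (hPmonic : ∀ n, (P n).Monic)
    (hP0 : P 0 = 1) (hP1 : P 1 = X - C (β 0))
    (hPrec : ∀ n, 1 ≤ n → X * P n = P (n + 1) + C (β n) * P n + C (γ n) * P (n - 1))
    (hγ : ∀ n, 1 ≤ n → γ n ≠ 0)
    (hQmonic : ∀ n, (Q n).Monic) (hQdeg : ∀ n, (Q n).natDegree = n)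
    (hQ : ∀ n, k + 1 ≤ n → Q n = P n + ∑ j ∈ Finset.Icc 1 k, C (a j) * P (n - j))
    (hQrec : ∀ n, 1 ≤ n → X * Q n = Q (n + 1) + C (βt n) * Q n + C (γt n) * Q (n - 1))
    (hγt : ∀ n, 1 ≤ n → γt n ≠ 0) :
    ∀ n, k + 2 ≤ n →
      γ n + a 1 * (β (n - 1) - β n) = γ (n - k) ∧
      ∀ j, 2 ≤ j → j ≤ k →
        a (j - 1) * (γ (n - k) - γ (n - j + 1)) = a j * (β (n - j) - β n) :=
  stmt_0_general P Q β γ βt γt k a hk hak hPmonic hP0 hP1 hPrec hQ hQrec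
end

section
/- Let {P_n}_{n≥0} be a sequence of monic real polynomials with P_0 = 1, P_1(x) = x − β_0 and x·P_n(x) = P_{n+1}(x) + β_n·P_n(x) + γ_n·P_{n−1}(x) for all n ≥ 1, with γ_n ≠ 0 for all n ≥ 1. Let k ≥ 1, let a_1,…,a_k be real numbers with a_k ≠ 0, and let {Q_n}_{n≥0} be monic polynomials with deg Q_n = n such that Q_n = P_n + a_1·P_{n−1} + … + a_k·P_{n−k} for all n ≥ k+1. If {Q_n} satisfies a three-term recurrence x·Q_n(x) = Q_{n+1}(x) + β̃_n·Q_n(x) + γ̃_n·Q_{n−1}(x) for all n ≥ 1 with γ̃_n ≠ 0, then for every n ≥ k+1 one has β̃_n = β_n and γ̃_n = γ_n + a_1·(β_{n−1} − β_n). -/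
/-!
Write `Q n = P n + S n` with `S n = ∑_{j=1}^k a j P (n - j)`. Subtracting the recurrence of `P` from
that of `Q` at `n` gives
`(β n - βt n) P n + γ n P (n - 1) + (X S n - S (n + 1)) = γt n Q (n - 1) + βt n S n`.
By the recurrence of `P`, `X S n - S (n + 1) = ∑ a j (β (n - j) P (n - j) + γ (n - j) P (n - j - 1))`,
which has degree `< n` and coefficient `a 1 β (n - 1)` at `X ^ (n - 1)`. Since `P m` and `Q m` are
monic of degree `m`, comparing the coefficients of `X ^ n` and `X ^ (n - 1)` gives the two identities.
-/

open Polynomial Finset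

section

variable {R : Type*} [CommRing R] {P : ℕ → R[X]}

theorem Polynomial.Monic.coeff_eq_one_of_natDegree_eq {p : R[X]} {m : ℕ} (hp : p.Monic)
    (hm : p.natDegree = m) : p.coeff m = 1 :=
  hm ▸ hp.coeff_natDegree

theorem monic_natDegree_of_threeTermRec [Nontrivial R] {β γ : ℕ → R} (hP0 : P 0 = 1)
    (hP1 : P 1 = X - C (β 0))
    (hrec : ∀ n, 1 ≤ n → X * P n = P (n + 1) + C (β n) * P n + C (γ n) * P (n - 1)) (m : ℕ) :
    (P m).Monic ∧ (P m).natDegree = m := by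
  induction m using Nat.strong_induction_on with
  | _ m ih =>
    match m with
    | 0 => simp [hP0]
    | 1 => exact hP1 ▸ ⟨monic_X_sub_C _, natDegree_X_sub_C _⟩
    | t + 2 =>
      obtain ⟨hmon₁, hdeg₁⟩ := ih (t + 1) (by omega)
      have hdeg₀ := (ih t (by omega)).2
      have hlead : (X * P (t + 1)).Monic ∧ (X * P (t + 1)).natDegree = t + 2 := by
        refine ⟨monic_X.mul hmon₁, ?_⟩
        rw [monic_X.natDegree_mul hmon₁, natDegree_X, hdeg₁]
        ring
      have hlow : (C (β (t + 1)) * P (t + 1) + C (γ (t + 1)) * P t).natDegree < t + 2 := by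
        refine (natDegree_add_le _ _).trans_lt (max_lt ?_ ?_)
        · exact (natDegree_C_mul_le _ _).trans_lt (by omega)
        · exact (natDegree_C_mul_le _ _).trans_lt (by omega)
      have hP : P (t + 2) = X * P (t + 1) - (C (β (t + 1)) * P (t + 1) + C (γ (t + 1)) * P t) := by
        have h := hrec (t + 1) (by omega)
        rw [Nat.add_sub_cancel] at h
        linear_combination -h
      rw [← hlead.2] at hlow
      rw [hP, natDegree_sub_eq_left_of_natDegree_lt hlow]
      exact ⟨hlead.1.sub_of_left (degree_lt_degree hlow), hlead.2⟩

theorem natDegree_sum_C_mul_sub_le (hdeg : ∀ m, (P m).natDegree ≤ m) (c : ℕ → R) (k n : ℕ) :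
    (∑ j ∈ Icc 1 k, C (c j) * P (n - j)).natDegree ≤ n - 1 :=
  natDegree_sum_le_of_forall_le _ _ fun j hj =>
    (natDegree_C_mul_le _ _).trans ((hdeg _).trans (by simp only [mem_Icc] at hj; omega))

theorem coeff_sum_C_mul_sub_pred (hP : ∀ m, (P m).Monic ∧ (P m).natDegree = m) (c : ℕ → R)
    {k n : ℕ} (hk : 1 ≤ k) (hkn : k < n) :
    (∑ j ∈ Icc 1 k, C (c j) * P (n - j)).coeff (n - 1) = c 1 := by
  rw [finsetSum_coeff, sum_eq_single_of_mem 1 (mem_Icc.mpr ⟨le_rfl, hk⟩), coeff_C_mul,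
    (hP (n - 1)).1.coeff_eq_one_of_natDegree_eq (hP (n - 1)).2, mul_one]
  intro j hj hj1
  rw [coeff_C_mul, coeff_eq_zero_of_natDegree_lt, mul_zero]
  rw [(hP _).2]
  simp only [mem_Icc] at hj
  omega

theorem X_mul_sum_C_mul_sub_sub_sum {β γ : ℕ → R}
    (hrec : ∀ n, 1 ≤ n → X * P n = P (n + 1) + C (β n) * P n + C (γ n) * P (n - 1))
    (a : ℕ → R) {k n : ℕ} (hkn : k < n) :
    X * ∑ j ∈ Icc 1 k, C (a j) * P (n - j) - ∑ j ∈ Icc 1 k, C (a j) * P (n + 1 - j) =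
      ∑ j ∈ Icc 1 k, C (a j * β (n - j)) * P (n - j) +
        ∑ j ∈ Icc 1 k, C (a j * γ (n - j)) * P (n - 1 - j) := by
  rw [mul_sum, ← sum_sub_distrib, ← sum_add_distrib]
  refine sum_congr rfl fun j hj => ?_
  simp only [mem_Icc] at hj
  rw [show n + 1 - j = n - j + 1 by omega, show n - 1 - j = n - j - 1 by omega, C_mul, C_mul]
  linear_combination C (a j) * hrec (n - j) (by omega)

theorem coeff_X_mul_sum_C_mul_sub_sub_sum {β γ : ℕ → R}
    (hrec : ∀ n, 1 ≤ n → X * P n = P (n + 1) + C (β n) * P n + C (γ n) * P (n - 1))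
    (hP : ∀ m, (P m).Monic ∧ (P m).natDegree = m) (a : ℕ → R) {k n : ℕ} (hk : 1 ≤ k)
    (hkn : k < n) :
    (X * ∑ j ∈ Icc 1 k, C (a j) * P (n - j) - ∑ j ∈ Icc 1 k, C (a j) * P (n + 1 - j)).coeff n = 0 ∧
    (X * ∑ j ∈ Icc 1 k, C (a j) * P (n - j) - ∑ j ∈ Icc 1 k, C (a j) * P (n + 1 - j)).coeff (n - 1) =
      a 1 * β (n - 1) := by
  have hdeg (m : ℕ) : (P m).natDegree ≤ m := (hP m).2.le
  have hlow := natDegree_sum_C_mul_sub_le hdeg (fun j => a j * γ (n - j)) k (n - 1)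
  rw [X_mul_sum_C_mul_sub_sub_sum hrec a hkn]
  constructor
  · refine coeff_eq_zero_of_natDegree_lt ((natDegree_add_le _ _).trans_lt (max_lt ?_ ?_))
    · exact (natDegree_sum_C_mul_sub_le hdeg _ k n).trans_lt (by omega)
    · exact hlow.trans_lt (by omega)
  · rw [coeff_add, coeff_sum_C_mul_sub_pred hP _ hk hkn,
      coeff_eq_zero_of_natDegree_lt (hlow.trans_lt (by omega)), add_zero]

end

theorem stmt_1_general (P Q : ℕ → Polynomial ℝ) (β γ βt γt : ℕ → ℝ) (k : ℕ) (a : ℕ → ℝ)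
    (hk : 1 ≤ k)
    (hP0 : P 0 = 1) (hP1 : P 1 = X - C (β 0))
    (hPrec : ∀ n, 1 ≤ n → X * P n = P (n + 1) + C (β n) * P n + C (γ n) * P (n - 1))
    (hQmonic : ∀ n, (Q n).Monic) (hQdeg : ∀ n, (Q n).natDegree = n)
    (hQ : ∀ n, k + 1 ≤ n → Q n = P n + ∑ j ∈ Finset.Icc 1 k, C (a j) * P (n - j))
    (hQrec : ∀ n, 1 ≤ n → X * Q n = Q (n + 1) + C (βt n) * Q n + C (γt n) * Q (n - 1)) :
    ∀ n, k + 1 ≤ n →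
      βt n = β n ∧ γt n = γ n + a 1 * (β (n - 1) - β n) := by
  intro n hn
  have hP := monic_natDegree_of_threeTermRec hP0 hP1 hPrec
  have key : C (β n - βt n) * P n + C (γ n) * P (n - 1) +
      (X * ∑ j ∈ Icc 1 k, C (a j) * P (n - j) - ∑ j ∈ Icc 1 k, C (a j) * P (n + 1 - j)) =
      C (γt n) * Q (n - 1) + C (βt n) * ∑ j ∈ Icc 1 k, C (a j) * P (n - j) := by
    have h := hQrec n (by omega)
    rw [hQ n hn, hQ (n + 1) (by omega)] at h
    rw [C_sub]
    linear_combination h - hPrec n (by omega)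
  obtain ⟨hTn, hTn'⟩ := coeff_X_mul_sum_C_mul_sub_sub_sum hPrec hP a hk hn
  have hSn := natDegree_sum_C_mul_sub_le (fun m => (hP m).2.le) a k n
  have hc := congrArg (coeff · n) key
  have hc' := congrArg (coeff · (n - 1)) key
  simp only [coeff_add, coeff_C_mul] at hc hc'
  rw [hTn, (hP n).1.coeff_eq_one_of_natDegree_eq (hP n).2,
    coeff_eq_zero_of_natDegree_lt (p := P (n - 1)) (by rw [(hP _).2]; omega),
    coeff_eq_zero_of_natDegree_lt (hSn.trans_lt (by omega)),
    coeff_eq_zero_of_natDegree_lt (p := Q (n - 1)) (by rw [hQdeg]; omega)] at hc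
  rw [hTn', (hP _).1.coeff_eq_one_of_natDegree_eq (hP _).2,
    (hQmonic _).coeff_eq_one_of_natDegree_eq (hQdeg _),
    coeff_sum_C_mul_sub_pred hP a hk hn] at hc'
  have hβ : βt n = β n := by linear_combination -hc
  exact ⟨hβ, by linear_combination -hc' - ((P n).coeff (n - 1) + a 1) * hβ⟩

theorem stmt_1 (P Q : ℕ → Polynomial ℝ) (β γ βt γt : ℕ → ℝ) (k : ℕ) (a : ℕ → ℝ)
    (hk : 1 ≤ k) (hak : a k ≠ 0)
    (hPmonic : ∀ n, (P n).Monic)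
    (hP0 : P 0 = 1) (hP1 : P 1 = X - C (β 0))
    (hPrec : ∀ n, 1 ≤ n → X * P n = P (n + 1) + C (β n) * P n + C (γ n) * P (n - 1))
    (hγ : ∀ n, 1 ≤ n → γ n ≠ 0)
    (hQmonic : ∀ n, (Q n).Monic) (hQdeg : ∀ n, (Q n).natDegree = n)
    (hQ : ∀ n, k + 1 ≤ n → Q n = P n + ∑ j ∈ Finset.Icc 1 k, C (a j) * P (n - j))
    (hQrec : ∀ n, 1 ≤ n → X * Q n = Q (n + 1) + C (βt n) * Q n + C (γt n) * Q (n - 1))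
    (hγt : ∀ n, 1 ≤ n → γt n ≠ 0) :
    ∀ n, k + 1 ≤ n →
      βt n = β n ∧ γt n = γ n + a 1 * (β (n - 1) - β n) :=
  stmt_1_general P Q β γ βt γt k a hk hP0 hP1 hPrec hQmonic hQdeg hQ hQrec
end

section
/- Let {P_n}_{n≥0} be a sequence of monic real polynomials with P_0 = 1, P_1(x) = x − β_0 and x·P_n(x) = P_{n+1}(x) + β_n·P_n(x) + γ_n·P_{n−1}(x) for all n ≥ 1. Let k ≥ 1 and a_1,…,a_k be real numbers, and for m ≥ k+1 set Q_m = P_m + Σ_{j=1}^k a_j·P_{m−j}. Then for every n ≥ k+2 the following polynomial identity holds: x·Q_n(x) = Q_{n+1}(x) + β_n·Q_n(x) + [γ_n + a_1·(β_{n−1} − β_n)]·Q_{n−1}(x) + Σ_{j=2}^k { a_j·(β_{n−j} − β_n) − a_{j−1}·[γ_n − γ_{n−j+1} + a_1·(β_{n−1} − β_n)] }·P_{n−j}(x) − a_k·[γ_n − γ_{n−k} + a_1·(β_{n−1} − β_n)]·P_{n−k−1}(x). -/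
/-!
Apply the recurrence to every `P (n - j)` occurring in `X * Q n`, but measure it against the
coefficients `β n` and `c = γ n + a 1 * (β (n - 1) - β n)` used for `Q`: the shifted polynomial
`P (m - j)` then leaves the defect `(β (n - j) - β n) P (n - j) + (γ (n - j) - c) P (n - j - 1)`.
Collecting the coefficient of each `P (n - i)` gives the stated sum; `c` is exactly the value that
kills the coefficient of `P (n - 1)`.
-/

open Polynomial Finset

lemma sum_Icc_add_shift {M : Type*} [AddCommMonoid M] (u w : ℕ → M) {k : ℕ} (hk : 1 ≤ k) :
    ∑ j ∈ Icc 1 k, (u j + w (j + 1)) = u 1 + ∑ j ∈ Icc 2 k, (u j + w j) + w (k + 1) := by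
  have hu : ∑ j ∈ Icc 1 k, u j = u 1 + ∑ j ∈ Icc 2 k, u j := by
    rw [← add_sum_Ioc_eq_sum_Icc hk, ← Icc_add_one_left_eq_Ioc]
    rfl
  have hw : ∑ j ∈ Icc 1 k, w (j + 1) = ∑ j ∈ Icc 2 k, w j + w (k + 1) := by
    rw [← sum_Icc_succ_top (by omega), show Icc 2 (k + 1) = Icc (1 + 1) (k + 1) from rfl,
      ← map_add_right_Icc, sum_map]
    rfl
  rw [sum_add_distrib, sum_add_distrib, hu, hw]
  abel

section ThreeTermRecurrence

variable {P : ℕ → ℝ[X]} {β γ : ℕ → ℝ}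

lemma X_mul_sub_shifted_recurrence
    (hPrec : ∀ n, 1 ≤ n → X * P n = P (n + 1) + C (β n) * P n + C (γ n) * P (n - 1))
    (c : ℝ) {n j : ℕ} (hj : j < n) :
    X * P (n - j) - P (n + 1 - j) - C (β n) * P (n - j) - C c * P (n - 1 - j)
      = C (β (n - j) - β n) * P (n - j) + C (γ (n - j) - c) * P (n - (j + 1)) := by
  have hrec := hPrec (n - j) (by omega)
  rw [show n - j + 1 = n + 1 - j by omega, show n - j - 1 = n - 1 - j by omega] at hrec
  rw [hrec, show n - (j + 1) = n - 1 - j by omega, C_sub, C_sub]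
  ring

lemma X_mul_sub_perturbed_recurrence
    (hPrec : ∀ n, 1 ≤ n → X * P n = P (n + 1) + C (β n) * P n + C (γ n) * P (n - 1))
    {Q : ℕ → ℝ[X]} {k : ℕ} {a : ℕ → ℝ}
    (hQ : ∀ m, k + 1 ≤ m → Q m = P m + ∑ j ∈ Icc 1 k, C (a j) * P (m - j))
    (c : ℝ) {n : ℕ} (hn : k + 2 ≤ n) :
    X * Q n - Q (n + 1) - C (β n) * Q n - C c * Q (n - 1)
      = C (γ n - c) * P (n - 1) + ∑ j ∈ Icc 1 k,
          (C (a j * (β (n - j) - β n)) * P (n - j)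
            + C (a j * (γ (n - j) - c)) * P (n - (j + 1))) := by
  have hP := X_mul_sub_shifted_recurrence hPrec c (j := 0) (by omega : 0 < n)
  have hsum : ∑ j ∈ Icc 1 k, (X * (C (a j) * P (n - j)) - C (a j) * P (n + 1 - j)
        - C (β n) * (C (a j) * P (n - j)) - C c * (C (a j) * P (n - 1 - j)))
      = ∑ j ∈ Icc 1 k, (C (a j * (β (n - j) - β n)) * P (n - j)
            + C (a j * (γ (n - j) - c)) * P (n - (j + 1))) := by
    refine sum_congr rfl fun j hj => ?_
    have hj : j < n := by simp only [mem_Icc] at hj; omega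
    rw [C_mul, C_mul]
    linear_combination C (a j) * X_mul_sub_shifted_recurrence hPrec c hj
  simp only [sum_sub_distrib, ← mul_sum] at hsum
  simp only [Nat.sub_zero, sub_self, C_0, zero_mul, zero_add] at hP
  rw [hQ n (by omega), hQ (n + 1) (by omega), hQ (n - 1) (by omega)]
  linear_combination hP + hsum

end ThreeTermRecurrence

theorem stmt_2_general (P Q : ℕ → Polynomial ℝ) (β γ : ℕ → ℝ) (k : ℕ) (a : ℕ → ℝ)
    (hk : 1 ≤ k)
    (hPrec : ∀ n, 1 ≤ n → X * P n = P (n + 1) + C (β n) * P n + C (γ n) * P (n - 1))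
    (hQ : ∀ m, k + 1 ≤ m → Q m = P m + ∑ j ∈ Finset.Icc 1 k, C (a j) * P (m - j)) :
    ∀ n, k + 2 ≤ n →
      X * Q n = Q (n + 1) + C (β n) * Q n
        + C (γ n + a 1 * (β (n - 1) - β n)) * Q (n - 1)
        + ∑ j ∈ Finset.Icc 2 k,
            C (a j * (β (n - j) - β n)
               - a (j - 1) * (γ n - γ (n - j + 1) + a 1 * (β (n - 1) - β n))) * P (n - j)
        - C (a k * (γ n - γ (n - k) + a 1 * (β (n - 1) - β n))) * P (n - k - 1) := by
  intro n hn
  set c := γ n + a 1 * (β (n - 1) - β n)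
  have hdefect := X_mul_sub_perturbed_recurrence hPrec hQ c hn
  have hregroup := sum_Icc_add_shift (fun j => C (a j * (β (n - j) - β n)) * P (n - j))
    (fun j => C (a (j - 1) * (γ (n + 1 - j) - c)) * P (n - j)) hk
  simp only [Nat.add_sub_cancel, Nat.add_sub_add_right] at hregroup
  have hmiddle : ∑ j ∈ Icc 2 k, (C (a j * (β (n - j) - β n)) * P (n - j)
        + C (a (j - 1) * (γ (n + 1 - j) - c)) * P (n - j))
      = ∑ j ∈ Icc 2 k, C (a j * (β (n - j) - β n)
          - a (j - 1) * (γ n - γ (n - j + 1) + a 1 * (β (n - 1) - β n))) * P (n - j) := by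
    refine sum_congr rfl fun j hj => ?_
    rw [show n + 1 - j = n - j + 1 by simp only [mem_Icc] at hj; omega, ← add_mul, ← C_add]
    congr 2
    ring
  have hbottom : C (γ n - c) * P (n - 1) + C (a 1 * (β (n - 1) - β n)) * P (n - 1) = 0 := by
    rw [← add_mul, ← C_add, show γ n - c + a 1 * (β (n - 1) - β n) = 0 by ring, C_0, zero_mul]
  have htop : C (a k * (γ (n - k) - c)) * P (n - (k + 1))
      = -(C (a k * (γ n - γ (n - k) + a 1 * (β (n - 1) - β n))) * P (n - (k + 1))) := by
    rw [← neg_mul, ← C_neg]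
    congr 2
    ring
  rw [hregroup, hmiddle, htop] at hdefect
  rw [Nat.sub_sub]
  linear_combination hdefect + hbottom

theorem stmt_2 (P Q : ℕ → Polynomial ℝ) (β γ : ℕ → ℝ) (k : ℕ) (a : ℕ → ℝ)
    (hk : 1 ≤ k)
    (hPmonic : ∀ n, (P n).Monic)
    (hP0 : P 0 = 1) (hP1 : P 1 = X - C (β 0))
    (hPrec : ∀ n, 1 ≤ n → X * P n = P (n + 1) + C (β n) * P n + C (γ n) * P (n - 1))
    (hQ : ∀ m, k + 1 ≤ m → Q m = P m + ∑ j ∈ Finset.Icc 1 k, C (a j) * P (m - j)) :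
    ∀ n, k + 2 ≤ n →
      X * Q n = Q (n + 1) + C (β n) * Q n
        + C (γ n + a 1 * (β (n - 1) - β n)) * Q (n - 1)
        + ∑ j ∈ Finset.Icc 2 k,
            C (a j * (β (n - j) - β n)
               - a (j - 1) * (γ n - γ (n - j + 1) + a 1 * (β (n - 1) - β n))) * P (n - j)
        - C (a k * (γ n - γ (n - k) + a 1 * (β (n - 1) - β n))) * P (n - k - 1) :=
  stmt_2_general P Q β γ k a hk hPrec hQ
end

section
/- Let {P_n}_{n≥0} be a sequence of monic real polynomials with P_0 = 1, P_1(x) = x − β_0 and x·P_n(x) = P_{n+1}(x) + β_n·P_n(x) + γ_n·P_{n−1}(x) for all n ≥ 1, with γ_n ≠ 0 for all n ≥ 1. Let k ≥ 1, let a_1,…,a_k be real numbers, and for m ≥ k+1 set Q_m = P_m + Σ_{j=1}^k a_j·P_{m−j}. Assume that for every n ≥ k+2: γ_n + a_1·(β_{n−1} − β_n) = γ_{n−k} and a_{j−1}·(γ_{n−k} − γ_{n−j+1}) = a_j·(β_{n−j} − β_n) for 2 ≤ j ≤ k. Then for every n ≥ k+2 one has x·Q_n(x) = Q_{n+1}(x)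 + β_n·Q_n(x) + γ_{n−k}·Q_{n−1}(x), and the coefficient γ_{n−k} is nonzero. -/
open Polynomial Finset

/-! Expanding `X Q_n` by the recurrence for `P` (and writing `a_0 = 1`), the difference
`X Q_n - Q_{n+1} - β_n Q_n - γ_{n-k} Q_{n-1}` is
`∑_{j ≤ k} a_j ((β_{n-j} - β_n) P_{n-j} + (γ_{n-j} - γ_{n-k}) P_{n-j-1})`.
Its coefficient of `P_{n-i}` is `a_i (β_{n-i} - β_n) + a_{i-1} (γ_{n-i+1} - γ_{n-k})`, which the
hypotheses make zero for `1 ≤ i ≤ k` and which vanishes identically for `i = 0` and `i = k + 1`. -/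

section ThreeTermRecurrence

variable {R M : Type*} [CommRing R] [AddCommGroup M] [Module R M]

theorem sum_range_smul_add_smul_succ_eq_zero {u w : ℕ → R} {v : ℕ → M} (K : ℕ)
    (h0 : u 0 = 0) (hK : w K = 0) (h : ∀ i < K, u (i + 1) + w i = 0) :
    ∑ j ∈ range (K + 1), (u j • v j + w j • v (j + 1)) = 0 := by
  rw [sum_add_distrib, sum_range_succ', sum_range_succ, h0, hK, zero_smul, zero_smul,
    add_zero, add_zero, ← sum_add_distrib]
  exact sum_eq_zero fun i hi => by rw [← add_smul, h i (mem_range.mp hi), zero_smul]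

theorem sum_range_update_zero_smul (a : ℕ → R) (f : ℕ → M) (k : ℕ) :
    ∑ j ∈ range (k + 1), Function.update a 0 1 j • f j = f 0 + ∑ j ∈ Icc 1 k, a j • f j := by
  rw [sum_range_succ', add_comm, Function.update_self, one_smul,
    ← Finset.Ico_add_one_right_eq_Icc, sum_Ico_eq_sum_range]
  simp [add_comm 1]

theorem apply_sum_smul_eq_of_recurrence (T : M →ₗ[R] M) {P : ℕ → M} {β γ : ℕ → R}
    (hrec : ∀ m, 1 ≤ m → T (P m) = P (m + 1) + β m • P m + γ m • P (m - 1))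
    (c : ℕ → R) (K n : ℕ) (hn : K + 1 ≤ n)
    (hc : ∀ i < K, c i * (γ (n - K) - γ (n - i)) = c (i + 1) * (β (n - (i + 1)) - β n)) :
    T (∑ j ∈ range (K + 1), c j • P (n - j)) =
      ∑ j ∈ range (K + 1), c j • P (n + 1 - j) + β n • ∑ j ∈ range (K + 1), c j • P (n - j)
        + γ (n - K) • ∑ j ∈ range (K + 1), c j • P (n - 1 - j) := by
  have hdefect : ∑ j ∈ range (K + 1), ((c j * (β (n - j) - β n)) • P (n - j)
      + (c j * (γ (n - j) - γ (n - K))) • P (n - (j + 1))) = 0 :=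
    sum_range_smul_add_smul_succ_eq_zero (v := fun j => P (n - j)) K (by simp) (by simp)
      fun i hi => by linear_combination -hc i hi
  rw [map_sum, smul_sum, smul_sum, ← sum_add_distrib, ← sum_add_distrib, ← sub_eq_zero,
    ← sum_sub_distrib, ← hdefect]
  refine sum_congr rfl fun j hj => ?_
  have hj : j < K + 1 := mem_range.mp hj
  rw [map_smul, hrec (n - j) (by omega), show n + 1 - j = n - j + 1 by omega,
    show n - j - 1 = n - (j + 1) by omega, show n - 1 - j = n - (j + 1) by omega]
  module

end ThreeTermRecurrence

theorem stmt_3_general (P Q : ℕ → Polynomial ℝ) (β γ : ℕ → ℝ) (k : ℕ) (a : ℕ → ℝ)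
    (hPrec : ∀ n, 1 ≤ n → X * P n = P (n + 1) + C (β n) * P n + C (γ n) * P (n - 1))
    (hγ : ∀ n, 1 ≤ n → γ n ≠ 0)
    (hQ : ∀ m, k + 1 ≤ m → Q m = P m + ∑ j ∈ Finset.Icc 1 k, C (a j) * P (m - j))
    (hcond1 : ∀ n, k + 2 ≤ n → γ n + a 1 * (β (n - 1) - β n) = γ (n - k))
    (hcond2 : ∀ n, k + 2 ≤ n → ∀ j, 2 ≤ j → j ≤ k →
        a (j - 1) * (γ (n - k) - γ (n - j + 1)) = a j * (β (n - j) - β n)) :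
    ∀ n, k + 2 ≤ n →
      X * Q n = Q (n + 1) + C (β n) * Q n + C (γ (n - k)) * Q (n - 1) ∧
      γ (n - k) ≠ 0 := by
  intro n hn
  refine ⟨?_, hγ (n - k) (by omega)⟩
  -- With `c 0 = 1`, `hcond1` becomes the relation `hc` at `i = 0`.
  set c := Function.update a 0 1
  have hQc : ∀ m, k + 1 ≤ m → Q m = ∑ j ∈ range (k + 1), c j • P (m - j) := fun m hm => by
    rw [hQ m hm, sum_range_update_zero_smul]
    simp only [C_mul', Nat.sub_zero]
  have hc : ∀ i < k, c i * (γ (n - k) - γ (n - i)) = c (i + 1) * (β (n - (i + 1)) - β n) := by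
    rintro (_ | i) hi
    · simp only [c, Function.update_self, zero_add, Function.update_of_ne one_ne_zero,
        Nat.sub_zero, one_mul]
      linear_combination -hcond1 n hn
    · have h := hcond2 n hn (i + 2) (by omega) (by omega)
      rw [show n - (i + 2) + 1 = n - (i + 1) by omega] at h
      simpa [c] using h
  rw [C_mul', C_mul', hQc n (by omega), hQc (n + 1) (by omega), hQc (n - 1) (by omega)]
  exact apply_sum_smul_eq_of_recurrence (LinearMap.mulLeft ℝ (X : ℝ[X])) (P := P)
    (fun m hm => by simpa only [LinearMap.mulLeft_apply, C_mul'] using hPrec m hm) c k n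
    (by omega) hc

theorem stmt_3 (P Q : ℕ → Polynomial ℝ) (β γ : ℕ → ℝ) (k : ℕ) (a : ℕ → ℝ)
    (hk : 1 ≤ k)
    (hPmonic : ∀ n, (P n).Monic)
    (hP0 : P 0 = 1) (hP1 : P 1 = X - C (β 0))
    (hPrec : ∀ n, 1 ≤ n → X * P n = P (n + 1) + C (β n) * P n + C (γ n) * P (n - 1))
    (hγ : ∀ n, 1 ≤ n → γ n ≠ 0)
    (hQ : ∀ m, k + 1 ≤ m → Q m = P m + ∑ j ∈ Finset.Icc 1 k, C (a j) * P (m - j))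
    (hcond1 : ∀ n, k + 2 ≤ n → γ n + a 1 * (β (n - 1) - β n) = γ (n - k))
    (hcond2 : ∀ n, k + 2 ≤ n → ∀ j, 2 ≤ j → j ≤ k →
        a (j - 1) * (γ (n - k) - γ (n - j + 1)) = a j * (β (n - j) - β n)) :
    ∀ n, k + 2 ≤ n →
      X * Q n = Q (n + 1) + C (β n) * Q n + C (γ (n - k)) * Q (n - 1) ∧
      γ (n - k) ≠ 0 :=
  stmt_3_general P Q β γ k a hPrec hγ hQ hcond1 hcond2
end

section
/- Let {P_n}_{n≥0} be a sequence of monic real polynomials with P_0 = 1, P_1(x) = x − β_0 and x·P_n(x) = P_{n+1}(x) + β_n·P_n(x) + γ_n·P_{n−1}(x) for all n ≥ 1, with γ_n ≠ 0 for all n ≥ 1. Let k ≥ 1, let a_1,…,a_k be real numbers with a_k ≠ 0, and let {Q_n}_{n≥0} be monic polynomials with deg Q_n = n such that Q_n = P_n + a_1·P_{n−1} + … + a_k·P_{n−k} for all n ≥ k+1, and suppose {Q_n} satisfies a three-term recurrence x·Q_n(x) = Q_{n+1}(x) + β̃_n·Q_n(x) + γ̃_n·Q_{n−1}(x) for all n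 ≥ 1 with γ̃_n ≠ 0. Let a_1^{(k)},…,a_k^{(k)} be the (unique) real numbers such that Q_k = P_k + Σ_{j=1}^k a_j^{(k)}·P_{k−j}. Then: γ_{k+1} + a_1·(β_k − β_{k+1}) ≠ 0; for each j with 1 ≤ j ≤ k−1, a_j·γ_{k−j+1} + a_{j+1}·(β_{k−j} − β_{k+1}) = a_j^{(k)}·[γ_{k+1} + a_1·(β_k − β_{k+1})]; and a_k·γ_1 = a_k^{(k)}·[γ_{k+1} + a_1·(β_k − β_{k+1})]. -/
/-!
Apply the recurrence of `Q` at `n = k + 1`: `γ̃_{k+1} Q_k = x Q_{k+1} - Q_{k+2} - β̃_{k+1} Q_{k+1}`.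
Since `Q_{k+1}` and `Q_{k+2}` are built from the same coefficients `a_j`, expanding the right-hand
side with the recurrence of `P` cancels the `P_{k+2-j}` terms and leaves an explicit combination of
`P_0, …, P_{k+1}`. The `P_n` have degree `n` and are monic, so they form a basis of `ℝ[X]`, and
comparing coordinates at `P_{k+1}`, `P_k`, `P_{k-j}` and `P_0` gives `β̃_{k+1} = β_{k+1}`,
`γ̃_{k+1} = γ_{k+1} + a_1 (β_k - β_{k+1})` (nonzero since `γ̃_{k+1}` is), and then the relations
for the `a_j^{(k)}`.
-/

open Polynomial Finset

section ThreeTermRecurrence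

variable {R : Type*} [CommRing R] {P : ℕ → R[X]} {β γ : ℕ → R}

theorem degree_eq_of_threeTermRecurrence [Nontrivial R] (hP0 : P 0 = 1)
    (hP1 : P 1 = X - C (β 0))
    (hPrec : ∀ n, 1 ≤ n → X * P n = P (n + 1) + C (β n) * P n + C (γ n) * P (n - 1))
    (n : ℕ) : (P n).degree = n := by
  induction n using Nat.twoStepInduction with
  | zero => simp [hP0]
  | one => simp [hP1]
  | more n ih₀ ih₁ =>
    have hP : P (n + 2) = X * P (n + 1) - (C (β (n + 1)) * P (n + 1) + C (γ (n + 1)) * P n) := by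
      rw [hPrec (n + 1) n.succ_pos, Nat.add_sub_cancel]
      ring
    have hX : (X * P (n + 1)).degree = ↑(n + 2) := by
      rw [X_mul, degree_mul_X, ih₁]
      norm_cast
    have hlow : (C (β (n + 1)) * P (n + 1) + C (γ (n + 1)) * P n).degree < ↑(n + 2) := by
      refine (degree_add_le _ _).trans_lt (max_lt ?_ ?_) <;> rw [C_mul']
      · exact (degree_smul_le _ _).trans_lt (by rw [ih₁]; norm_cast; omega)
      · exact (degree_smul_le _ _).trans_lt (by rw [ih₀]; norm_cast; omega)
    rw [hP, degree_sub_eq_left_of_degree_lt (hX ▸ hlow), hX]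

variable (hPrec : ∀ n, 1 ≤ n → X * P n = P (n + 1) + C (β n) * P n + C (γ n) * P (n - 1))
include hPrec

theorem X_mul_sub_sub_of_threeTermRecurrence {m : ℕ} (hm : 1 ≤ m) (t : R) :
    X * P m - P (m + 1) - C t * P m = C (β m - t) * P m + C (γ m) * P (m - 1) := by
  rw [hPrec m hm, map_sub]
  ring

theorem X_mul_sub_sub_sum_of_threeTermRecurrence {n : ℕ} (hn : 1 ≤ n) {s : Finset ℕ}
    (hs : ∀ j ∈ s, j < n) (a : ℕ → R) (t : R) :
    X * (P n + ∑ j ∈ s, C (a j) * P (n - j)) - (P (n + 1) + ∑ j ∈ s, C (a j) * P (n + 1 - j))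
        - C t * (P n + ∑ j ∈ s, C (a j) * P (n - j)) =
      C (β n - t) * P n + C (γ n) * P (n - 1)
        + ∑ j ∈ s, (C (a j * (β (n - j) - t)) * P (n - j)
          + C (a j * γ (n - j)) * P (n - 1 - j)) := by
  have hterm : ∀ j ∈ s, X * (C (a j) * P (n - j)) - C (a j) * P (n + 1 - j)
      - C t * (C (a j) * P (n - j)) =
        C (a j * (β (n - j) - t)) * P (n - j) + C (a j * γ (n - j)) * P (n - 1 - j) := by
    intro j hj
    have h := X_mul_sub_sub_of_threeTermRecurrence hPrec (m := n - j) (by grind) t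
    rw [show n + 1 - j = n - j + 1 by grind, show n - 1 - j = n - j - 1 by omega, map_mul, map_mul]
    linear_combination C (a j) * h
  rw [← sum_congr rfl hterm, sum_sub_distrib, sum_sub_distrib, ← mul_sum, ← mul_sum]
  linear_combination X_mul_sub_sub_of_threeTermRecurrence hPrec hn t

end ThreeTermRecurrence

section Coordinate

theorem exists_coord_of_monic_of_degree_eq {R : Type*} [CommRing R] [IsDomain R] {P : ℕ → R[X]}
    (hmonic : ∀ n, (P n).Monic) (hdeg : ∀ n, (P n).degree = n) (m : ℕ) :
    ∃ φ : R[X] →ₗ[R] R, ∀ i, φ (P i) = if i = m then 1 else 0 := by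
  let b := (Sequence.mk P hdeg).basis fun i => by simp [(hmonic i).leadingCoeff]
  refine ⟨b.coord m, fun i => ?_⟩
  have hbi : b i = P i := Sequence.basis_eq_self _ _ i
  rw [Module.Basis.coord_apply, ← hbi, Module.Basis.repr_self, Finsupp.single_apply]

variable {R : Type*} [CommRing R] {P : ℕ → R[X]} {m : ℕ} {φ : R[X] →ₗ[R] R}
  (hφ : ∀ i, φ (P i) = if i = m then 1 else 0)
include hφ

theorem apply_C_mul_of_apply_eq_ite (c : R) (i : ℕ) :
    φ (C c * P i) = if i = m then c else 0 := by
  rw [C_mul', map_smul, hφ, smul_eq_mul, mul_ite, mul_one, mul_zero]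

-- For `m > n` the truncated difference `n - m` is `0`, which correctly lies outside `Icc 1 k`.
theorem apply_sum_Icc_of_apply_eq_ite {k n : ℕ} (hkn : k ≤ n) (c : ℕ → R) :
    φ (∑ j ∈ Icc 1 k, C (c j) * P (n - j)) = if n - m ∈ Icc 1 k then c (n - m) else 0 := by
  simp only [map_sum, apply_C_mul_of_apply_eq_ite hφ]
  rw [← sum_ite_eq' (Icc 1 k) (n - m) c]
  refine sum_congr rfl fun j hj => ?_
  simp only [mem_Icc] at hj
  congr 1
  grind

end Coordinate

section PerturbedSequence

variable {R : Type*} [CommRing R] {P Q : ℕ → R[X]} {β γ βt γt a a' : ℕ → R} {k : ℕ}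

theorem C_mul_eq_of_perturbed_threeTermRecurrence
    (hPrec : ∀ n, 1 ≤ n → X * P n = P (n + 1) + C (β n) * P n + C (γ n) * P (n - 1))
    (hQ : ∀ n, k + 1 ≤ n → Q n = P n + ∑ j ∈ Icc 1 k, C (a j) * P (n - j))
    (hQrec : X * Q (k + 1) = Q (k + 2) + C (βt (k + 1)) * Q (k + 1) + C (γt (k + 1)) * Q k) :
    C (γt (k + 1)) * Q k =
      C (β (k + 1) - βt (k + 1)) * P (k + 1) + C (γ (k + 1)) * P k
        + ∑ j ∈ Icc 1 k, C (a j * (β (k + 1 - j) - βt (k + 1))) * P (k + 1 - j)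
        + ∑ j ∈ Icc 1 k, C (a j * γ (k + 1 - j)) * P (k - j) := by
  have h := X_mul_sub_sub_sum_of_threeTermRecurrence hPrec (n := k + 1) (by omega)
    (s := Icc 1 k) (fun j hj => by simp only [mem_Icc] at hj; omega) a (βt (k + 1))
  rw [← hQ (k + 1) le_rfl, ← hQ (k + 1 + 1) (by omega), sum_add_distrib] at h
  simp only [Nat.add_sub_cancel] at h
  linear_combination h - hQrec

theorem coord_eq_of_perturbed_threeTermRecurrence [IsDomain R]
    (hmonic : ∀ n, (P n).Monic) (hdeg : ∀ n, (P n).degree = n)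
    (hPrec : ∀ n, 1 ≤ n → X * P n = P (n + 1) + C (β n) * P n + C (γ n) * P (n - 1))
    (hQ : ∀ n, k + 1 ≤ n → Q n = P n + ∑ j ∈ Icc 1 k, C (a j) * P (n - j))
    (hQrec : X * Q (k + 1) = Q (k + 2) + C (βt (k + 1)) * Q (k + 1) + C (γt (k + 1)) * Q k)
    (hQk : Q k = P k + ∑ j ∈ Icc 1 k, C (a' j) * P (k - j)) (m : ℕ) :
    γt (k + 1) * ((if k = m then 1 else 0) + if k - m ∈ Icc 1 k then a' (k - m) else 0) =
      (if k + 1 = m then β (k + 1) - βt (k + 1) else 0) + (if k = m then γ (k + 1) else 0)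
        + (if k + 1 - m ∈ Icc 1 k then a (k + 1 - m) * (β (k + 1 - (k + 1 - m)) - βt (k + 1))
            else 0)
        + (if k - m ∈ Icc 1 k then a (k - m) * γ (k + 1 - (k - m)) else 0) := by
  obtain ⟨φ, hφ⟩ := exists_coord_of_monic_of_degree_eq hmonic hdeg m
  have h := congrArg φ (C_mul_eq_of_perturbed_threeTermRecurrence hPrec hQ hQrec)
  rwa [hQk, C_mul', map_smul, map_add, map_add, map_add, map_add, smul_eq_mul,
    apply_C_mul_of_apply_eq_ite hφ, apply_C_mul_of_apply_eq_ite hφ, hφ,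
    apply_sum_Icc_of_apply_eq_ite hφ le_rfl, apply_sum_Icc_of_apply_eq_ite hφ le_rfl,
    apply_sum_Icc_of_apply_eq_ite hφ (Nat.le_succ k)] at h

end PerturbedSequence

theorem stmt_4_general (P Q : ℕ → Polynomial ℝ) (β γ βt γt : ℕ → ℝ) (k : ℕ) (a a' : ℕ → ℝ)
    (hk : 1 ≤ k)
    (hPmonic : ∀ n, (P n).Monic)
    (hP0 : P 0 = 1) (hP1 : P 1 = X - C (β 0))
    (hPrec : ∀ n, 1 ≤ n → X * P n = P (n + 1) + C (β n) * P n + C (γ n) * P (n - 1))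
    (hQ : ∀ n, k + 1 ≤ n → Q n = P n + ∑ j ∈ Finset.Icc 1 k, C (a j) * P (n - j))
    (hQrec : ∀ n, 1 ≤ n → X * Q n = Q (n + 1) + C (βt n) * Q n + C (γt n) * Q (n - 1))
    (hγt : ∀ n, 1 ≤ n → γt n ≠ 0)
    (hQk : Q k = P k + ∑ j ∈ Finset.Icc 1 k, C (a' j) * P (k - j)) :
    γ (k + 1) + a 1 * (β k - β (k + 1)) ≠ 0 ∧
    (∀ j, 1 ≤ j → j ≤ k - 1 →
      a j * γ (k - j + 1) + a (j + 1) * (β (k - j) - β (k + 1))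
        = a' j * (γ (k + 1) + a 1 * (β k - β (k + 1)))) ∧
    a k * γ 1 = a' k * (γ (k + 1) + a 1 * (β k - β (k + 1))) := by
  have coord := coord_eq_of_perturbed_threeTermRecurrence hPmonic
    (degree_eq_of_threeTermRecurrence hP0 hP1 hPrec) hPrec hQ (hQrec (k + 1) k.succ_pos) hQk
  have hβt : βt (k + 1) = β (k + 1) := by
    have h := coord (k + 1)
    simp (disch := omega) only [mem_Icc, if_neg, if_true] at h
    linear_combination h
  have hγt' : γt (k + 1) = γ (k + 1) + a 1 * (β k - β (k + 1)) := by
    have h := coord k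
    simp (disch := omega) only [mem_Icc, if_pos, if_neg, if_true, Nat.sub_self,
      Nat.add_sub_cancel_left, Nat.add_sub_cancel, hβt] at h
    linear_combination h
  refine ⟨hγt' ▸ hγt (k + 1) k.succ_pos, fun j hj₁ hj₂ => ?_, ?_⟩
  · have h := coord (k - j)
    rw [show k - (k - j) = j by omega, show k + 1 - (k - j) = j + 1 by omega,
      show k + 1 - (j + 1) = k - j by omega, show k + 1 - j = k - j + 1 by omega] at h
    simp (disch := omega) only [mem_Icc, if_pos, if_neg, hβt] at h
    linear_combination a' j * hγt' - h
  · have h := coord 0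
    simp (disch := omega) only [mem_Icc, if_pos, if_neg, Nat.sub_zero,
      Nat.add_sub_cancel_left] at h
    linear_combination a' k * hγt' - h

theorem stmt_4 (P Q : ℕ → Polynomial ℝ) (β γ βt γt : ℕ → ℝ) (k : ℕ) (a a' : ℕ → ℝ)
    (hk : 1 ≤ k) (hak : a k ≠ 0)
    (hPmonic : ∀ n, (P n).Monic)
    (hP0 : P 0 = 1) (hP1 : P 1 = X - C (β 0))
    (hPrec : ∀ n, 1 ≤ n → X * P n = P (n + 1) + C (β n) * P n + C (γ n) * P (n - 1))
    (hγ : ∀ n, 1 ≤ n → γ n ≠ 0)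
    (hQmonic : ∀ n, (Q n).Monic) (hQdeg : ∀ n, (Q n).natDegree = n)
    (hQ : ∀ n, k + 1 ≤ n → Q n = P n + ∑ j ∈ Finset.Icc 1 k, C (a j) * P (n - j))
    (hQrec : ∀ n, 1 ≤ n → X * Q n = Q (n + 1) + C (βt n) * Q n + C (γt n) * Q (n - 1))
    (hγt : ∀ n, 1 ≤ n → γt n ≠ 0)
    (hQk : Q k = P k + ∑ j ∈ Finset.Icc 1 k, C (a' j) * P (k - j)) :
    γ (k + 1) + a 1 * (β k - β (k + 1)) ≠ 0 ∧
    (∀ j, 1 ≤ j → j ≤ k - 1 →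
      a j * γ (k - j + 1) + a (j + 1) * (β (k - j) - β (k + 1))
        = a' j * (γ (k + 1) + a 1 * (β k - β (k + 1)))) ∧
    a k * γ 1 = a' k * (γ (k + 1) + a 1 * (β k - β (k + 1))) :=
  stmt_4_general P Q β γ βt γt k a a' hk hPmonic hP0 hP1 hPrec hQ hQrec hγt hQk
end

section
/- Let {P_n}_{n≥0} be a sequence of monic real polynomials with P_0 = 1, P_1(x) = x − β_0 and x·P_n(x) = P_{n+1}(x) + β_n·P_n(x) + γ_n·P_{n−1}(x) for all n ≥ 1, with γ_n ≠ 0 for all n ≥ 1. Let a_2 be a nonzero real number and let {Q_n}_{n≥0} be monic polynomials with deg Q_n = n such that Q_n = P_n + a_2·P_{n−2} for all n ≥ 3, and suppose {Q_n} satisfies a three-term recurrence x·Q_n(x) = Q_{n+1}(x) + β̃_n·Q_n(x) + γ̃_n·Q_{n−1}(x) for all n ≥ 1 with γ̃_n ≠ 0. Then for every n ≥ 4, β_n = β_{n−2} and γ_n = γ_{n−2}. -/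
/-!
Since `deg P_n = n`, the `P_n` are linearly independent. Writing `Q_{n-1}, Q_n, Q_{n+1}` in terms
of the `P_k` and using the recurrence of `P` at `n` and `n - 2`, the recurrence of `Q` at `n ≥ 4`
becomes the relation
`(β_n - β̃_n) P_n + (γ_n - γ̃_n) P_{n-1} + a₂ (β_{n-2} - β̃_n) P_{n-2} + a₂ (γ_{n-2} - γ̃_n) P_{n-3} = 0`,
so all four coefficients vanish and, as `a₂ ≠ 0`, `β_n = β̃_n = β_{n-2}` and `γ_n = γ̃_n = γ_{n-2}`.
-/

open Polynomial

theorem Polynomial.degree_eq_of_three_term_recurrence {R : Type*} [CommRing R] [Nontrivial R]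
    {P : ℕ → R[X]} {β γ : ℕ → R} (h0 : (P 0).degree = 0) (h1 : (P 1).degree = 1)
    (hrec : ∀ n, 1 ≤ n → X * P n = P (n + 1) + C (β n) * P n + C (γ n) * P (n - 1)) (n : ℕ) :
    (P n).degree = n := by
  suffices ∀ n, (P n).degree = n ∧ (P (n + 1)).degree = ↑(n + 1) from (this n).1
  intro n
  induction n with
  | zero => exact ⟨h0, by simpa using h1⟩
  | succ n ih =>
    refine ⟨ih.2, ?_⟩
    have hnext : P (n + 2) = P (n + 1) * (X - C (β (n + 1))) - γ (n + 1) • P n := by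
      have := hrec (n + 1) (Nat.le_add_left 1 n)
      rw [Nat.add_sub_cancel] at this
      rw [smul_eq_C_mul]
      linear_combination -this
    have hlead : (P (n + 1) * (X - C (β (n + 1)))).degree = ↑(n + 2) := by
      rw [(monic_X_sub_C _).degree_mul, ih.2, degree_X_sub_C]
      rfl
    have hlow : (γ (n + 1) • P n).degree < ↑(n + 2) :=
      (degree_smul_le _ _).trans_lt <| by
        rw [ih.1]; exact WithBot.coe_lt_coe.mpr (by omega : n < n + 2)
    rw [hnext, degree_sub_eq_left_of_degree_lt (hlead ▸ hlow), hlead]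

theorem LinearIndependent.eq_zero_of_smul_add_smul_add_smul_add_smul {R M : Type*} [Ring R]
    [AddCommGroup M] [Module R M] {v : ℕ → M} (hv : LinearIndependent R v) {m : ℕ} {a b c d : R}
    (h : a • v (m + 3) + b • v (m + 2) + c • v (m + 1) + d • v m = 0) :
    a = 0 ∧ b = 0 ∧ c = 0 ∧ d = 0 := by
  have hv4 : LinearIndependent R fun i : Fin 4 ↦ v (m + i) :=
    hv.comp _ fun i j hij ↦ Fin.ext (by simpa using hij)
  have hsum : ∑ i : Fin 4, ![d, c, b, a] i • v (m + i) = 0 := by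
    simpa [Fin.sum_univ_four, add_assoc, add_comm, add_left_comm] using h
  have := Fintype.linearIndependent_iff.mp hv4 _ hsum
  exact ⟨this 3, this 2, this 1, this 0⟩

theorem stmt_5_general (P Q : ℕ → Polynomial ℝ) (β γ βt γt : ℕ → ℝ) (a2 : ℝ) (ha2 : a2 ≠ 0)
    (hP0 : P 0 = 1) (hP1 : P 1 = X - C (β 0))
    (hPrec : ∀ n, 1 ≤ n → X * P n = P (n + 1) + C (β n) * P n + C (γ n) * P (n - 1))
    (hQ : ∀ n, 3 ≤ n → Q n = P n + C a2 * P (n - 2))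
    (hQrec : ∀ n, 1 ≤ n → X * Q n = Q (n + 1) + C (βt n) * Q n + C (γt n) * Q (n - 1)) :
    ∀ n, 4 ≤ n → β n = β (n - 2) ∧ γ n = γ (n - 2) := by
  intro n hn
  obtain ⟨m, rfl⟩ : ∃ m, n = m + 4 := ⟨n - 4, by omega⟩
  have hindep : LinearIndependent ℝ P :=
    Sequence.linearIndependent ⟨P, degree_eq_of_three_term_recurrence (by simp [hP0])
      (by rw [hP1, degree_X_sub_C]) hPrec⟩
  have hcomb : (β (m + 4) - βt (m + 4)) • P (m + 1 + 3) + (γ (m + 4) - γt (m + 4)) • P (m + 1 + 2)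
      + (a2 * (β (m + 2) - βt (m + 4))) • P (m + 1 + 1)
      + (a2 * (γ (m + 2) - γt (m + 4))) • P (m + 1) = 0 := by
    have hQ4 := hQrec (m + 4) (by omega)
    rw [hQ (m + 4) (by omega), hQ (m + 4 + 1) (by omega), hQ (m + 4 - 1) (by omega)] at hQ4
    have hP4 := hPrec (m + 4) (by omega)
    have hP2 := hPrec (m + 2) (by omega)
    simp only [add_assoc, Nat.reduceAdd, Nat.reduceSubDiff, Nat.add_one_sub_one] at hQ4 hP4 hP2 ⊢
    simp only [smul_eq_C_mul, C_sub, C_mul]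
    linear_combination hQ4 - hP4 - C a2 * hP2
  obtain ⟨hβ4, hγ4, hβ2, hγ2⟩ := hindep.eq_zero_of_smul_add_smul_add_smul_add_smul hcomb
  rw [mul_eq_zero, or_iff_right ha2] at hβ2 hγ2
  show β (m + 4) = β (m + 2) ∧ γ (m + 4) = γ (m + 2)
  constructor <;> linarith

theorem stmt_5 (P Q : ℕ → Polynomial ℝ) (β γ βt γt : ℕ → ℝ) (a2 : ℝ) (ha2 : a2 ≠ 0)
    (hPmonic : ∀ n, (P n).Monic)
    (hP0 : P 0 = 1) (hP1 : P 1 = X - C (β 0))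
    (hPrec : ∀ n, 1 ≤ n → X * P n = P (n + 1) + C (β n) * P n + C (γ n) * P (n - 1))
    (hγ : ∀ n, 1 ≤ n → γ n ≠ 0)
    (hQmonic : ∀ n, (Q n).Monic) (hQdeg : ∀ n, (Q n).natDegree = n)
    (hQ : ∀ n, 3 ≤ n → Q n = P n + C a2 * P (n - 2))
    (hQrec : ∀ n, 1 ≤ n → X * Q n = Q (n + 1) + C (βt n) * Q n + C (γt n) * Q (n - 1))
    (hγt : ∀ n, 1 ≤ n → γt n ≠ 0) :
    ∀ n, 4 ≤ n → β n = β (n - 2) ∧ γ n = γ (n - 2) :=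
  stmt_5_general P Q β γ βt γt a2 ha2 hP0 hP1 hPrec hQ hQrec
end

section
/- Let {P_n}_{n≥0} be a sequence of monic real polynomials with P_0 = 1, P_1(x) = x − β_0 and x·P_n(x) = P_{n+1}(x) + β_n·P_n(x) + γ_n·P_{n−1}(x) for all n ≥ 1, with γ_n ≠ 0 for all n ≥ 1. Let a_1, a_2 be real numbers with a_1 ≠ 0 and a_1² < 4·a_2, and let θ ∈ (0,π) be the unique angle such that λ = e^{iθ} satisfies a_1²·λ = a_2·(1+λ)². Let {Q_n}_{n≥0} be monic polynomials with deg Q_n = n such that Q_n = P_n + a_1·P_{n−1} + a_2·P_{n−2} for all n ≥ 3, and suppose {Q_n} satisfies a three-term recurrence x·Q_n(x) = Q_{n+1}(x) + β̃_n·Q_n(x) + γ̃_n·Q_{n−1}(x) for all n ≥ 1 with γ̃_n ≠ 0. Then there exist real numbers A, D and complex numbers B, E such that for all n ≥ 2: β_n = A + B·e^{inθ} + conj(B)·e^{−inθ} and γ_n = D + E·e^{inθ} + conj(E)·e^{−inθ} (as identities in ℂ, where β_n, γ_n are regarded as complex numbers), and moreover a_1·λ·B = (1+λ)·E. -/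
/-!
Expanding the recurrence of `Q` in the basis `P` and comparing the coefficients of
`P n, …, P (n - 3)` gives, for `n ≥ 2`,
`γ (n + 2) - γ n = a1 (β (n + 2) - β (n + 1))` and
`a1 (γ (n + 1) - γ n) = a2 (β (n + 2) - β n)`.
Eliminating `γ`, the increments of `β` satisfy a linear recurrence with characteristic
polynomial `a2 (1 + x)² - a1² x`, whose roots are `λ` and `conj λ`; hence they are
`C λⁿ + conj (C λⁿ)`, and summing them gives the form of `β`. The second relation then gives
the increments of `γ`, with `a1 E = a2 (1 + λ) B`, which by the equation for `λ` is
`a1 λ B = (1 + λ) E`.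
-/

open Polynomial ComplexConjugate

section ThreeTermRecurrence

variable {R : Type*} [CommRing R]

theorem monic_and_natDegree_eq_of_threeTerm [Nontrivial R] {P : ℕ → R[X]} {β γ : ℕ → R}
    (hP0 : P 0 = 1) (hP1 : P 1 = X - C (β 0))
    (hrec : ∀ n, 1 ≤ n → X * P n = P (n + 1) + C (β n) * P n + C (γ n) * P (n - 1))
    (n : ℕ) :
    (P n).Monic ∧ (P n).natDegree = n := by
  induction n using Nat.twoStepInduction with
  | zero => simp [hP0]
  | one => simp [hP1, monic_X_sub_C]
  | more n _ ih =>
    have hnext : P (n + 2) = (X - C (β (n + 1))) * P (n + 1) - C (γ (n + 1)) * P n := by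
      have h := hrec (n + 1) le_add_self
      rw [Nat.add_sub_cancel] at h
      linear_combination -h
    have hmain : ((X - C (β (n + 1))) * P (n + 1)).natDegree = n + 2 := by
      rw [(monic_X_sub_C _).natDegree_mul ih.1, natDegree_X_sub_C, ih.2, add_comm]
    have hlow : (C (γ (n + 1)) * P n).natDegree < n + 2 :=
      (natDegree_C_mul_le _ _).trans_lt (by omega)
    rw [hnext]
    exact ⟨((monic_X_sub_C _).mul ih.1).sub_of_left (degree_lt_degree (hmain ▸ hlow)),
      by rw [natDegree_sub_eq_left_of_natDegree_lt (hmain ▸ hlow), hmain]⟩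

theorem linearIndependent_of_threeTerm [IsDomain R] {P : ℕ → R[X]} {β γ : ℕ → R}
    (hP0 : P 0 = 1) (hP1 : P 1 = X - C (β 0))
    (hrec : ∀ n, 1 ≤ n → X * P n = P (n + 1) + C (β n) * P n + C (γ n) * P (n - 1)) :
    LinearIndependent R P :=
  Polynomial.Sequence.linearIndependent
    ⟨P, fun n => by
      obtain ⟨hm, hd⟩ := monic_and_natDegree_eq_of_threeTerm hP0 hP1 hrec n
      rw [degree_eq_natDegree hm.ne_zero, hd]⟩

end ThreeTermRecurrence

theorem LinearIndependent.eq_zero_of_four {R M : Type*} [Ring R] [AddCommGroup M] [Module R M]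
    {v : ℕ → M} (hv : LinearIndependent R v) {m : ℕ} {c₀ c₁ c₂ c₃ : R}
    (h : c₀ • v m + c₁ • v (m + 1) + c₂ • v (m + 2) + c₃ • v (m + 3) = 0) :
    c₀ = 0 ∧ c₁ = 0 ∧ c₂ = 0 ∧ c₃ = 0 := by
  have hinj : Function.Injective fun i : Fin 4 => m + i :=
    fun i j hij => Fin.ext (by simpa using hij)
  have := Fintype.linearIndependent_iff.mp (hv.comp _ hinj) ![c₀, c₁, c₂, c₃]
    (by simpa [Fin.sum_univ_four] using h)
  exact ⟨this 0, this 1, this 2, this 3⟩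

section Perturbation

variable {K : Type*} [CommRing K] {P Q : ℕ → K[X]} {β γ βt γt : ℕ → K} {a1 a2 : K}

theorem coeff_relations_of_perturbation (hP : LinearIndependent K P)
    (hPrec : ∀ n, 1 ≤ n → X * P n = P (n + 1) + C (β n) * P n + C (γ n) * P (n - 1))
    (hQ : ∀ n, 3 ≤ n → Q n = P n + C a1 * P (n - 1) + C a2 * P (n - 2))
    (hQrec : ∀ n, 1 ≤ n → X * Q n = Q (n + 1) + C (βt n) * Q n + C (γt n) * Q (n - 1))
    (n : ℕ) :
    a2 * γ (n + 2) - a2 * γt (n + 4) = 0 ∧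
      a1 * γ (n + 3) + a2 * β (n + 2) - a2 * βt (n + 4) - a1 * γt (n + 4) = 0 ∧
      γ (n + 4) + a1 * β (n + 3) - a1 * βt (n + 4) - γt (n + 4) = 0 ∧
      β (n + 4) - βt (n + 4) = 0 := by
  have hQn := hQ (n + 4) (by omega)
  have hQn1 := hQ (n + 5) (by omega)
  have hQn2 := hQ (n + 3) (by omega)
  have hrecQ := hQrec (n + 4) (by omega)
  have hrec4 := hPrec (n + 4) (by omega)
  have hrec3 := hPrec (n + 3) (by omega)
  have hrec2 := hPrec (n + 2) (by omega)
  simp only [Nat.reduceSubDiff] at hQn hQn1 hQn2 hrecQ hrec4 hrec3 hrec2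
  refine hP.eq_zero_of_four (m := n + 1) ?_
  simp only [smul_eq_C_mul, map_sub, map_add, map_mul]
  rw [hQn, hQn1, hQn2] at hrecQ
  linear_combination hrecQ - hrec4 - C a1 * hrec3 - C a2 * hrec2

theorem sub_relations_of_perturbation [IsDomain K] (ha2 : a2 ≠ 0)
    (hP : LinearIndependent K P)
    (hPrec : ∀ n, 1 ≤ n → X * P n = P (n + 1) + C (β n) * P n + C (γ n) * P (n - 1))
    (hQ : ∀ n, 3 ≤ n → Q n = P n + C a1 * P (n - 1) + C a2 * P (n - 2))
    (hQrec : ∀ n, 1 ≤ n → X * Q n = Q (n + 1) + C (βt n) * Q n + C (γt n) * Q (n - 1))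
    (n : ℕ) (hn : 2 ≤ n) :
    γ (n + 2) - γ n = a1 * (β (n + 2) - β (n + 1)) ∧
      a1 * (γ (n + 1) - γ n) = a2 * (β (n + 2) - β n) := by
  obtain ⟨m, rfl⟩ := Nat.exists_eq_add_of_le' hn
  rw [show m + 2 + 2 = m + 4 from rfl, show m + 2 + 1 = m + 3 from rfl]
  obtain ⟨h₀, h₁, h₂, h₃⟩ := coeff_relations_of_perturbation hP hPrec hQ hQrec m
  have hγt : γt (m + 4) = γ (m + 2) := mul_left_cancel₀ ha2 (by linear_combination -h₀)
  have hβt : βt (m + 4) = β (m + 4) := by linear_combination -h₃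
  constructor
  · linear_combination h₂ + a1 * hβt + hγt
  · linear_combination h₁ + a2 * hβt + a1 * hγt

end Perturbation

noncomputable section Wave

def wave (B l : ℂ) (n : ℕ) : ℂ := B * l ^ n + conj B * conj l ^ n

variable (B l : ℂ) (n : ℕ)

theorem ofReal_re_wave : ((wave B l n).re : ℂ) = wave B l n :=
  Complex.conj_eq_iff_re.mp <| by
    simp only [wave, map_add, map_mul, map_pow, Complex.conj_conj]; ring

theorem wave_add_one_sub : wave B l (n + 1) - wave B l n = wave (B * (l - 1)) l n := by
  simp only [wave, map_mul, map_sub, map_one]; ring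

theorem wave_add_two_sub : wave B l (n + 2) - wave B l n = wave (B * (l ^ 2 - 1)) l n := by
  simp only [wave, map_mul, map_sub, map_one, map_pow]; ring

theorem ofReal_mul_wave (r : ℝ) : r * wave B l n = wave (r * B) l n := by
  simp only [wave, map_mul, Complex.conj_ofReal]; ring

theorem wave_linear_rec {a b c : ℝ} (hroot : a * l ^ 2 + b * l + c = 0) :
    a * wave B l (n + 2) + b * wave B l (n + 1) + c * wave B l n = 0 := by
  have hroot' : a * conj l ^ 2 + b * conj l + c = 0 := by
    simpa using congrArg conj hroot
  simp only [wave]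
  linear_combination (B * l ^ n) * hroot + (conj B * conj l ^ n) * hroot'

end Wave

theorem exists_wave_of_linear_rec {x : ℕ → ℝ} {a b c : ℝ} {l : ℂ} {k : ℕ} (ha : a ≠ 0)
    (hl : conj l ≠ l) (hroot : a * l ^ 2 + b * l + c = 0)
    (hrec : ∀ n, k ≤ n → a * x (n + 2) + b * x (n + 1) + c * x n = 0) :
    ∃ C : ℂ, ∀ n, k ≤ n → (x n : ℂ) = wave C l n := by
  have hl0 : l ≠ 0 := fun h => hl (by simp [h])
  have hsub : l - conj l ≠ 0 := sub_ne_zero.mpr hl.symm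
  -- `C` solves `wave C l k = x k`, `wave C l (k + 1) = x (k + 1)`.
  set C : ℂ := (x (k + 1) - conj l * x k) / ((l - conj l) * l ^ k) with hC
  have hCconj : conj C = (x (k + 1) - l * x k) / ((conj l - l) * conj l ^ k) := by
    simp [hC, map_div₀]
  suffices h : ∀ n, k ≤ n →
      (x n : ℂ) = wave C l n ∧ (x (n + 1) : ℂ) = wave C l (n + 1) from
    ⟨C, fun n hn => (h n hn).1⟩
  intro n hn
  induction n, hn using Nat.le_induction with
  | base =>
    have : conj l - l ≠ 0 := sub_ne_zero.mpr hl
    have : conj l ≠ 0 := by simpa using hl0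
    constructor <;> simp only [wave, hCconj] <;> rw [hC] <;> field_simp <;> ring
  | succ n hn ih =>
    refine ⟨ih.2, mul_left_cancel₀ (Complex.ofReal_ne_zero.mpr ha) ?_⟩
    have := congrArg (fun t : ℝ => (t : ℂ)) (hrec n hn)
    push_cast at this
    linear_combination this - b * ih.2 - c * ih.1 - wave_linear_rec C l n hroot

theorem exists_add_wave_of_sub_eq_wave {x : ℕ → ℝ} {B l : ℂ} {k : ℕ}
    (h : ∀ n, k ≤ n → (x (n + 1) : ℂ) - x n = wave (B * (l - 1)) l n) :
    ∃ A : ℝ, ∀ n, k ≤ n → (x n : ℂ) = A + wave B l n := by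
  refine ⟨x k - (wave B l k).re, fun n hn => ?_⟩
  induction n, hn using Nat.le_induction with
  | base => push_cast; rw [ofReal_re_wave]; ring
  | succ n hn ih => linear_combination ih + h n hn - wave_add_one_sub B l n

theorem exists_wave_of_sub_relations {β γ : ℕ → ℝ} {a1 a2 : ℝ} {l : ℂ} (ha1 : a1 ≠ 0)
    (ha2 : a2 ≠ 0) (hl : conj l ≠ l) (hchar : (a1 ^ 2 : ℂ) * l = a2 * (1 + l) ^ 2)
    (hstep2 : ∀ n, 2 ≤ n → γ (n + 2) - γ n = a1 * (β (n + 2) - β (n + 1)))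
    (hstep1 : ∀ n, 2 ≤ n → a1 * (γ (n + 1) - γ n) = a2 * (β (n + 2) - β n)) :
    ∃ A D : ℝ, ∃ B E : ℂ,
      (∀ n, 2 ≤ n → (β n : ℂ) = A + wave B l n ∧ (γ n : ℂ) = D + wave E l n) ∧
        a1 * l * B = (1 + l) * E := by
  have hl1 : l - 1 ≠ 0 := sub_ne_zero.mpr fun h => hl (by simp [h])
  have hl1' : 1 + l ≠ 0 := fun h => hl (by
    rw [eq_neg_of_add_eq_zero_right h]; simp)
  obtain ⟨C, hC⟩ := exists_wave_of_linear_rec (x := fun n => β (n + 1) - β n)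
    (b := 2 * a2 - a1 ^ 2) ha2 hl (by push_cast; linear_combination -hchar)
    fun n hn => by
      linear_combination a1 * hstep2 n hn - hstep1 n hn - hstep1 (n + 1) (by omega)
  set B := C / (l - 1) with hB
  obtain ⟨A, hA⟩ := exists_add_wave_of_sub_eq_wave (x := β) (B := B) (k := 2) fun n hn => by
    rw [hB, div_mul_cancel₀ _ hl1, ← hC n hn]; push_cast; ring
  set E := a1 * l * B / (1 + l) with hE
  have haE : (a1 : ℂ) * E = a2 * (1 + l) * B := by
    rw [hE]; field_simp; linear_combination B * hchar
  obtain ⟨D, hD⟩ := exists_add_wave_of_sub_eq_wave (x := γ) (B := E) (k := 2) fun n hn => by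
    refine mul_left_cancel₀ (Complex.ofReal_ne_zero.mpr ha1) ?_
    calc (a1 : ℂ) * (γ (n + 1) - γ n) = a2 * (β (n + 2) - β n) := by
          exact_mod_cast hstep1 n hn
      _ = a2 * wave (B * (l ^ 2 - 1)) l n := by
        rw [hA (n + 2) (by omega), hA n hn, ← wave_add_two_sub]; ring
      _ = a1 * wave (E * (l - 1)) l n := by
        rw [ofReal_mul_wave, ofReal_mul_wave]; congr 1; linear_combination (1 - l) * haE
  exact ⟨A, D, B, E, fun n hn => ⟨hA n hn, hD n hn⟩, by rw [hE]; field_simp⟩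

theorem stmt_8_general (P Q : ℕ → Polynomial ℝ) (β γ βt γt : ℕ → ℝ) (a1 a2 θ : ℝ) (l : ℂ)
    (ha1 : a1 ≠ 0)
    (hθ1 : 0 < θ) (hθ2 : θ < Real.pi)
    (hlθ : l = Complex.exp (θ * Complex.I))
    (hl : (a1 ^ 2 : ℂ) * l = (a2 : ℂ) * (1 + l) ^ 2)
    (hP0 : P 0 = 1) (hP1 : P 1 = X - Polynomial.C (β 0))
    (hPrec : ∀ n, 1 ≤ n → X * P n
      = P (n + 1) + Polynomial.C (β n) * P n + Polynomial.C (γ n) * P (n - 1))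
    (hQ : ∀ n, 3 ≤ n → Q n = P n + Polynomial.C a1 * P (n - 1) + Polynomial.C a2 * P (n - 2))
    (hQrec : ∀ n, 1 ≤ n → X * Q n
      = Q (n + 1) + Polynomial.C (βt n) * Q n + Polynomial.C (γt n) * Q (n - 1)) :
    ∃ A D : ℝ, ∃ B E : ℂ,
      (∀ n : ℕ, 2 ≤ n →
        (β n : ℂ) = (A : ℂ) + B * Complex.exp ((n : ℂ) * θ * Complex.I)
            + (starRingEnd ℂ) B * Complex.exp (-((n : ℂ) * θ) * Complex.I) ∧
        (γ n : ℂ) = (D : ℂ) + E * Complex.exp ((n : ℂ) * θ * Complex.I)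
            + (starRingEnd ℂ) E * Complex.exp (-((n : ℂ) * θ) * Complex.I)) ∧
      (a1 : ℂ) * l * B = (1 + l) * E := by
  have hl0 : l ≠ 0 := hlθ ▸ Complex.exp_ne_zero _
  have ha2 : a2 ≠ 0 := by rintro rfl; simp [ha1, hl0] at hl
  have hl_im : 0 < l.im := by
    rw [hlθ, Complex.exp_ofReal_mul_I_im]; exact Real.sin_pos_of_pos_of_lt_pi hθ1 hθ2
  have hl_conj : conj l ≠ l := fun h => by linarith [Complex.conj_eq_iff_im.mp h]
  have hP := linearIndependent_of_threeTerm hP0 hP1 hPrec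
  obtain ⟨A, D, B, E, hform, hBE⟩ := exists_wave_of_sub_relations ha1 ha2 hl_conj hl
    (fun n hn => (sub_relations_of_perturbation ha2 hP hPrec hQ hQrec n hn).1)
    (fun n hn => (sub_relations_of_perturbation ha2 hP hPrec hQ hQrec n hn).2)
  have hexp : ∀ n : ℕ, Complex.exp ((n : ℂ) * θ * Complex.I) = l ^ n ∧
      Complex.exp (-((n : ℂ) * θ) * Complex.I) = conj l ^ n := fun n => by
    rw [hlθ, ← Complex.exp_conj, ← Complex.exp_nat_mul, ← Complex.exp_nat_mul]
    constructor <;> congr 1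
    · ring
    · simp only [map_mul, Complex.conj_ofReal, Complex.conj_I]; ring
  refine ⟨A, D, B, E, fun n hn => ?_, hBE⟩
  simpa only [(hexp n).1, (hexp n).2, wave, add_assoc] using hform n hn

theorem stmt_8 (P Q : ℕ → Polynomial ℝ) (β γ βt γt : ℕ → ℝ) (a1 a2 θ : ℝ) (l : ℂ)
    (ha1 : a1 ≠ 0) (ha : a1 ^ 2 < 4 * a2)
    (hθ1 : 0 < θ) (hθ2 : θ < Real.pi)
    (hlθ : l = Complex.exp (θ * Complex.I))
    (hl : (a1 ^ 2 : ℂ) * l = (a2 : ℂ) * (1 + l) ^ 2)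
    (hPmonic : ∀ n, (P n).Monic)
    (hP0 : P 0 = 1) (hP1 : P 1 = X - Polynomial.C (β 0))
    (hPrec : ∀ n, 1 ≤ n → X * P n
      = P (n + 1) + Polynomial.C (β n) * P n + Polynomial.C (γ n) * P (n - 1))
    (hγ : ∀ n, 1 ≤ n → γ n ≠ 0)
    (hQmonic : ∀ n, (Q n).Monic) (hQdeg : ∀ n, (Q n).natDegree = n)
    (hQ : ∀ n, 3 ≤ n → Q n = P n + Polynomial.C a1 * P (n - 1) + Polynomial.C a2 * P (n - 2))
    (hQrec : ∀ n, 1 ≤ n → X * Q n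
      = Q (n + 1) + Polynomial.C (βt n) * Q n + Polynomial.C (γt n) * Q (n - 1))
    (hγt : ∀ n, 1 ≤ n → γt n ≠ 0) :
    ∃ A D : ℝ, ∃ B E : ℂ,
      (∀ n : ℕ, 2 ≤ n →
        (β n : ℂ) = (A : ℂ) + B * Complex.exp ((n : ℂ) * θ * Complex.I)
            + (starRingEnd ℂ) B * Complex.exp (-((n : ℂ) * θ) * Complex.I) ∧
        (γ n : ℂ) = (D : ℂ) + E * Complex.exp ((n : ℂ) * θ * Complex.I)
            + (starRingEnd ℂ) E * Complex.exp (-((n : ℂ) * θ) * Complex.I)) ∧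
      (a1 : ℂ) * l * B = (1 + l) * E :=
  stmt_8_general P Q β γ βt γt a1 a2 θ l ha1 hθ1 hθ2 hlθ hl hP0 hP1 hPrec hQ hQrec
end

section
/- Let a_1, a_2 be real numbers with a_1 ≠ 0, a_2 ≠ 0 and a_1² > 4·a_2. Then there exists a unique real number λ with −1 < λ < 1 such that a_1²·λ = a_2·(1+λ)²; moreover this λ is nonzero. -/
/-! The equation `a₁² λ = a₂ (1 + λ)²` is the palindromic quadratic
`a₂ λ² + (2 a₂ - a₁²) λ + a₂ = 0`. Its left-minus-right side is `-a₁² < 0` at `λ = -1` and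
`a₁² - 4 a₂ > 0` at `λ = 1`, so it has a root in `(-1, 1)`. Two distinct roots of a palindromic
quadratic are reciprocal, so at most one of them lies in `(-1, 1)`. Finally `λ = 0` would force
`a₂ = 0`. -/

open Set

theorem mul_eq_one_of_palindromic_roots {K : Type*} [Field K] {a b x y : K} (ha : a ≠ 0)
    (hx : a * x ^ 2 + b * x + a = 0) (hy : a * y ^ 2 + b * y + a = 0) (hxy : x ≠ y) :
    x * y = 1 := by
  have hsum : a * (x + y) + b = 0 :=
    mul_left_cancel₀ (sub_ne_zero.2 hxy) (by linear_combination hx - hy)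
  exact mul_left_cancel₀ ha (by linear_combination -hx + x * hsum)

theorem eq_of_palindromic_roots_mem_Ioo {a b x y : ℝ} (ha : a ≠ 0)
    (hx : x ∈ Ioo (-1) 1) (hy : y ∈ Ioo (-1) 1)
    (hxr : a * x ^ 2 + b * x + a = 0) (hyr : a * y ^ 2 + b * y + a = 0) : x = y := by
  by_contra hxy
  have hlt : |x| * |y| < 1 :=
    mul_lt_one_of_nonneg_of_lt_one_left (abs_nonneg x) (abs_lt.2 hx) (abs_lt.2 hy).le
  rw [← abs_mul, mul_eq_one_of_palindromic_roots ha hxr hyr hxy, abs_one] at hlt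
  exact lt_irrefl 1 hlt

theorem stmt_9 (a1 a2 : ℝ) (ha1 : a1 ≠ 0) (ha2 : a2 ≠ 0) (ha : a1 ^ 2 > 4 * a2) :
    (∃! l : ℝ, -1 < l ∧ l < 1 ∧ a1 ^ 2 * l = a2 * (1 + l) ^ 2) ∧
    (∀ l : ℝ, -1 < l → l < 1 → a1 ^ 2 * l = a2 * (1 + l) ^ 2 → l ≠ 0) := by
  refine ⟨?_, fun l _ _ h hl0 => ha2 (by simpa [hl0] using h.symm)⟩
  obtain ⟨l, hl, hroot⟩ : ∃ l ∈ Ioo (-1 : ℝ) 1, a1 ^ 2 * l - a2 * (1 + l) ^ 2 = 0 := by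
    have hcont : ContinuousOn (fun l : ℝ => a1 ^ 2 * l - a2 * (1 + l) ^ 2) (Icc (-1) 1) := by
      fun_prop
    have hsign : (0 : ℝ) ∈ Ioo (a1 ^ 2 * -1 - a2 * (1 + -1) ^ 2) (a1 ^ 2 * 1 - a2 * (1 + 1) ^ 2) :=
      ⟨by norm_num; positivity, by linarith⟩
    exact intermediate_value_Ioo (by norm_num) hcont hsign
  refine ⟨l, ⟨hl.1, hl.2, by linarith⟩, fun y ⟨hy1, hy2, hy⟩ => ?_⟩
  exact eq_of_palindromic_roots_mem_Ioo (b := 2 * a2 - a1 ^ 2) ha2 ⟨hy1, hy2⟩ hl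
    (by linear_combination -hy) (by linear_combination -hroot)
end

section
/- Let a_1, a_2 be real numbers with a_1 ≠ 0 and a_2 ≠ 0, and let (β_n)_{n≥0} and (γ_n)_{n≥1} be sequences of real numbers such that for all n ≥ 4: a_1·(γ_{n−2} − γ_{n−1}) = a_2·(β_{n−2} − β_n) and γ_n − γ_{n−2} = a_1·(β_n − β_{n−1}). Then both sequences satisfy, for all n ≥ 5, the linear difference equation y_n + (1 − a_1²/a_2)·y_{n−1} − (1 − a_1²/a_2)·y_{n−2} − y_{n−3} = 0; that is, β_n + (1 − a_1²/a_2)·β_{n−1} − (1 − a_1²/a_2)·β_{n−2} − β_{n−3} = 0 and γ_n + (1 − a_1²/a_2)·γ_{n−1} − (1 − a_1²/a_2)·γ_{n−2} − γ_{n−3} = 0 for all n ≥ 5. -/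
/-!
Adding the first relation at two consecutive indices telescopes the `γ`-differences into
`γ_k - γ_{k+2}`, which the second relation turns into `-a₁ (β_{k+2} - β_{k+1})`; dividing by `a₂`
gives the recurrence for `β`. Symmetrically, adding the second relation at two consecutive indices
telescopes the `β`-differences into `β_{k+3} - β_{k+1}`, which the first relation turns into a
multiple of `γ_{k+1} - γ_{k+2}`.
-/

section

variable {K : Type*} [Field K] {a₁ a₂ : K} {β γ : ℕ → K}

theorem beta_difference_eq (ha₂ : a₂ ≠ 0)
    (h₁ : ∀ k, a₁ * (γ k - γ (k + 1)) = a₂ * (β k - β (k + 2)))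
    (h₂ : ∀ k, γ (k + 2) - γ k = a₁ * (β (k + 2) - β (k + 1))) (k : ℕ) :
    β (k + 3) + (1 - a₁ ^ 2 / a₂) * β (k + 2) - (1 - a₁ ^ 2 / a₂) * β (k + 1) - β k = 0 := by
  field_simp
  linear_combination h₁ (k + 1) + h₁ k + a₁ * h₂ k

theorem gamma_difference_eq (ha₂ : a₂ ≠ 0)
    (h₁ : ∀ k, a₁ * (γ k - γ (k + 1)) = a₂ * (β k - β (k + 2)))
    (h₂ : ∀ k, γ (k + 2) - γ k = a₁ * (β (k + 2) - β (k + 1))) (k : ℕ) :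
    γ (k + 3) + (1 - a₁ ^ 2 / a₂) * γ (k + 2) - (1 - a₁ ^ 2 / a₂) * γ (k + 1) - γ k = 0 := by
  field_simp
  linear_combination a₂ * h₂ (k + 1) + a₂ * h₂ k + a₁ * h₁ (k + 1)

end

theorem stmt_11_general (a1 a2 : ℝ) (ha2 : a2 ≠ 0) (β γ : ℕ → ℝ)
    (h1 : ∀ n, 4 ≤ n → a1 * (γ (n - 2) - γ (n - 1)) = a2 * (β (n - 2) - β n))
    (h2 : ∀ n, 4 ≤ n → γ n - γ (n - 2) = a1 * (β n - β (n - 1))) :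
    ∀ n, 5 ≤ n →
      β n + (1 - a1 ^ 2 / a2) * β (n - 1) - (1 - a1 ^ 2 / a2) * β (n - 2) - β (n - 3) = 0 ∧
      γ n + (1 - a1 ^ 2 / a2) * γ (n - 1) - (1 - a1 ^ 2 / a2) * γ (n - 2) - γ (n - 3) = 0 := by
  intro n hn
  obtain ⟨k, rfl⟩ : ∃ k, n = k + 3 + 2 := ⟨n - 5, by omega⟩
  have h1' : ∀ k, a1 * (γ (k + 2) - γ (k + 1 + 2)) = a2 * (β (k + 2) - β (k + 2 + 2)) :=
    fun k => h1 (k + 4) (by omega)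
  have h2' : ∀ k, γ (k + 2 + 2) - γ (k + 2) = a1 * (β (k + 2 + 2) - β (k + 1 + 2)) :=
    fun k => h2 (k + 4) (by omega)
  exact ⟨beta_difference_eq (β := fun k => β (k + 2)) ha2 h1' h2' k,
    gamma_difference_eq (γ := fun k => γ (k + 2)) ha2 h1' h2' k⟩

theorem stmt_11 (a1 a2 : ℝ) (ha1 : a1 ≠ 0) (ha2 : a2 ≠ 0) (β γ : ℕ → ℝ)
    (h1 : ∀ n, 4 ≤ n → a1 * (γ (n - 2) - γ (n - 1)) = a2 * (β (n - 2) - β n))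
    (h2 : ∀ n, 4 ≤ n → γ n - γ (n - 2) = a1 * (β n - β (n - 1))) :
    ∀ n, 5 ≤ n →
      β n + (1 - a1 ^ 2 / a2) * β (n - 1) - (1 - a1 ^ 2 / a2) * β (n - 2) - β (n - 3) = 0 ∧
      γ n + (1 - a1 ^ 2 / a2) * γ (n - 1) - (1 - a1 ^ 2 / a2) * γ (n - 2) - γ (n - 3) = 0 :=
  stmt_11_general a1 a2 ha2 β γ h1 h2
end

section
/- Let a_1, a_2 be real numbers with a_1 ≠ 0, a_2 ≠ 0, and let λ be a nonzero real number with −1 < λ < 1 and a_1²·λ = a_2·(1+λ)². Let A, B, C, D, E, F be real numbers with a_1·C = (1+λ)·F and a_1·λ·B = (1+λ)·E, and let (β_n) and (γ_n) be real sequences with β_n = A + B·λⁿ + C·λ⁻ⁿ and γ_n = D + E·λⁿ + F·λ⁻ⁿ for all n ≥ 2. Then for all n ≥ 4: a_1·(γ_{n−2} − γ_{n−1}) = a_2·(β_{n−2} − β_n) and γ_n − γ_{n−2} = a_1·(β_n − β_{n−1}). -/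
/-!
Each of the two relations is linear in `(β, γ)`, and the constants `A`, `D` cancel, so it suffices
to check them on the geometric parts with ratios `l` and `l⁻¹`. For a geometric sequence `x ^ n`
each relation reduces, after dividing by a power of `x`, to a single identity between the
coefficients; for `x = l` and `x = l⁻¹` these identities follow from `a1 * C = (1 + l) * F`,
`a1 * l * B = (1 + l) * E` and `a1 ^ 2 * l = a2 * (1 + l) ^ 2`, cancelling the factor `1 + l`.
-/

section GeometricRelations

variable {a1 a2 A B C D E F x y : ℝ}

theorem first_relation_of_geometric (hx : a1 * E * (1 - x) = a2 * B * (1 - x ^ 2))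
    (hy : a1 * F * (1 - y) = a2 * C * (1 - y ^ 2)) (k : ℕ) :
    a1 * ((D + E * x ^ k + F * y ^ k) - (D + E * x ^ (k + 1) + F * y ^ (k + 1))) =
      a2 * ((A + B * x ^ k + C * y ^ k) - (A + B * x ^ (k + 2) + C * y ^ (k + 2))) := by
  linear_combination x ^ k * hx + y ^ k * hy

theorem second_relation_of_geometric (hx : E * (x ^ 2 - 1) = a1 * B * x * (x - 1))
    (hy : F * (y ^ 2 - 1) = a1 * C * y * (y - 1)) (k : ℕ) :
    (D + E * x ^ (k + 2) + F * y ^ (k + 2)) - (D + E * x ^ k + F * y ^ k) =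
      a1 * ((A + B * x ^ (k + 2) + C * y ^ (k + 2)) - (A + B * x ^ (k + 1) + C * y ^ (k + 1))) := by
  linear_combination x ^ k * hx + y ^ k * hy

end GeometricRelations

section Coefficients

variable {a1 a2 l B C E F : ℝ}

theorem first_relation_coeff (h1l : 1 + l ≠ 0) (hl : a1 ^ 2 * l = a2 * (1 + l) ^ 2)
    (hBE : a1 * l * B = (1 + l) * E) : a1 * E * (1 - l) = a2 * B * (1 - l ^ 2) := by
  refine mul_left_cancel₀ h1l ?_
  linear_combination (1 - l) * (B * hl - a1 * hBE)

theorem first_relation_coeff_inv (hl0 : l ≠ 0) (h1l : 1 + l ≠ 0) (hl : a1 ^ 2 * l = a2 * (1 + l) ^ 2)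
    (hCF : a1 * C = (1 + l) * F) : a1 * F * (1 - l⁻¹) = a2 * C * (1 - l⁻¹ ^ 2) := by
  field_simp
  refine mul_left_cancel₀ h1l ?_
  linear_combination (l - 1) * C * hl - a1 * l * (l - 1) * hCF

theorem second_relation_coeff (hBE : a1 * l * B = (1 + l) * E) :
    E * (l ^ 2 - 1) = a1 * B * l * (l - 1) := by
  linear_combination (1 - l) * hBE

theorem second_relation_coeff_inv (hl0 : l ≠ 0) (hCF : a1 * C = (1 + l) * F) :
    F * (l⁻¹ ^ 2 - 1) = a1 * C * l⁻¹ * (l⁻¹ - 1) := by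
  field_simp
  linear_combination (l - 1) * hCF

end Coefficients

theorem stmt_13_general (a1 a2 l : ℝ)
    (hl0 : l ≠ 0) (hl1 : -1 < l)
    (hl : a1 ^ 2 * l = a2 * (1 + l) ^ 2)
    (A B C D E F : ℝ) (hCF : a1 * C = (1 + l) * F) (hBE : a1 * l * B = (1 + l) * E)
    (β γ : ℕ → ℝ)
    (hβ : ∀ n : ℕ, 2 ≤ n → β n = A + B * l ^ n + C * (l ^ n)⁻¹)
    (hγ : ∀ n : ℕ, 2 ≤ n → γ n = D + E * l ^ n + F * (l ^ n)⁻¹) :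
    ∀ n, 4 ≤ n →
      a1 * (γ (n - 2) - γ (n - 1)) = a2 * (β (n - 2) - β n) ∧
      γ n - γ (n - 2) = a1 * (β n - β (n - 1)) := by
  intro n hn
  obtain ⟨k, rfl⟩ := Nat.exists_eq_add_of_le' hn
  have h1l : 1 + l ≠ 0 := by linarith
  have hβ' (j : ℕ) : β (j + 2) = A + B * l ^ (j + 2) + C * l⁻¹ ^ (j + 2) := by
    rw [hβ _ le_add_self, inv_pow]
  have hγ' (j : ℕ) : γ (j + 2) = D + E * l ^ (j + 2) + F * l⁻¹ ^ (j + 2) := by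
    rw [hγ _ le_add_self, inv_pow]
  rw [show k + 4 - 2 = k + 2 by omega, show k + 4 - 1 = k + 1 + 2 by omega,
    show k + 4 = k + 2 + 2 by omega, hβ', hβ', hβ', hγ', hγ', hγ']
  exact ⟨first_relation_of_geometric (first_relation_coeff h1l hl hBE)
      (first_relation_coeff_inv hl0 h1l hl hCF) (k + 2),
    second_relation_of_geometric (second_relation_coeff hBE) (second_relation_coeff_inv hl0 hCF) (k + 2)⟩

theorem stmt_13 (a1 a2 l : ℝ) (ha1 : a1 ≠ 0) (ha2 : a2 ≠ 0)
    (hl0 : l ≠ 0) (hl1 : -1 < l) (hl2 : l < 1)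
    (hl : a1 ^ 2 * l = a2 * (1 + l) ^ 2)
    (A B C D E F : ℝ) (hCF : a1 * C = (1 + l) * F) (hBE : a1 * l * B = (1 + l) * E)
    (β γ : ℕ → ℝ)
    (hβ : ∀ n : ℕ, 2 ≤ n → β n = A + B * l ^ n + C * (l ^ n)⁻¹)
    (hγ : ∀ n : ℕ, 2 ≤ n → γ n = D + E * l ^ n + F * (l ^ n)⁻¹) :
    ∀ n, 4 ≤ n →
      a1 * (γ (n - 2) - γ (n - 1)) = a2 * (β (n - 2) - β n) ∧
      γ n - γ (n - 2) = a1 * (β n - β (n - 1)) :=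
  stmt_13_general a1 a2 l hl0 hl1 hl A B C D E F hCF hBE β γ hβ hγ
end

section
/- Let a_1, a_2 be real numbers with a_1 ≠ 0, let θ ∈ (0,π) and set λ = e^{iθ} ∈ ℂ, and assume (a_1² : ℂ)·λ = (a_2 : ℂ)·(1+λ)². Let A, D be real numbers and B, E complex numbers with a_1·λ·B = (1+λ)·E, and let (β_n) and (γ_n) be real sequences such that (β_n : ℂ) = A + B·λⁿ + conj(B)·λ̄ⁿ and (γ_n : ℂ) = D + E·λⁿ + conj(E)·λ̄ⁿ for all n ≥ 2, where λ̄ = conj(λ). Then for all n ≥ 4: a_1·(γ_{n−2} − γ_{n−1}) = a_2·(β_{n−2} − β_n) and γ_n − γ_{n−2} = a_1·(β_n − β_{n−1}). -/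
/-! Each of the three pieces `1`, `λⁿ`, `λ̄ⁿ` of `βₙ` and `γₙ` satisfies both relations on its own.
For the piece `B λⁿ, E λⁿ` the second relation is `E (λ² - 1) = a₁ λ B (λ - 1)`, i.e. the hypothesis
`a₁ λ B = (1 + λ) E` times `λ - 1`; combined with `a₁² λ = a₂ (1 + λ)²` and cancelling `1 + λ ≠ 0`
that hypothesis also gives `a₁ E = a₂ (1 + λ) B`, which yields the first relation. The piece `λ̄ⁿ` is
the complex conjugate of the piece `λⁿ`, and `λ ≠ -1` because `0 < θ < π`. -/

open Complex ComplexConjugate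

theorem one_add_exp_ofReal_mul_I_ne_zero {θ : ℝ} (h0 : 0 < θ) (hπ : θ < Real.pi) :
    1 + exp (θ * I) ≠ 0 := by
  intro h
  have him := congrArg Complex.im h
  simp only [add_im, one_im, exp_ofReal_mul_I_im, zero_im, zero_add] at him
  exact (Real.sin_pos_of_pos_of_lt_pi h0 hπ).ne' him

section Mode

variable {K : Type*} [Field K] {a₁ a₂ l B E : K}

theorem mode_coeff_relation (hBE : a₁ * l * B = (1 + l) * E)
    (hl : a₁ ^ 2 * l = a₂ * (1 + l) ^ 2) (hl₁ : 1 + l ≠ 0) :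
    a₁ * E = a₂ * (1 + l) * B :=
  mul_left_cancel₀ hl₁ (by linear_combination (-a₁) * hBE + B * hl)

theorem mode_relations (hBE : a₁ * l * B = (1 + l) * E)
    (hl : a₁ ^ 2 * l = a₂ * (1 + l) ^ 2) (hl₁ : 1 + l ≠ 0) (m : ℕ) :
    a₁ * (E * l ^ m - E * l ^ (m + 1)) = a₂ * (B * l ^ m - B * l ^ (m + 2)) ∧
      E * l ^ (m + 2) - E * l ^ m = a₁ * (B * l ^ (m + 2) - B * l ^ (m + 1)) :=
  ⟨by linear_combination (l ^ m - l ^ (m + 1)) * mode_coeff_relation hBE hl hl₁,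
    by linear_combination (l ^ m - l ^ (m + 1)) * hBE⟩

end Mode

theorem conj_mode_relations {a₁ a₂ : ℝ} {l B E : ℂ} (hBE : (a₁ : ℂ) * l * B = (1 + l) * E)
    (hl : (a₁ ^ 2 : ℂ) * l = a₂ * (1 + l) ^ 2) (hl₁ : 1 + l ≠ 0) (m : ℕ) :
    a₁ * (conj E * conj l ^ m - conj E * conj l ^ (m + 1)) =
        a₂ * (conj B * conj l ^ m - conj B * conj l ^ (m + 2)) ∧
      conj E * conj l ^ (m + 2) - conj E * conj l ^ m =
        a₁ * (conj B * conj l ^ (m + 2) - conj B * conj l ^ (m + 1)) := by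
  refine mode_relations ?_ ?_ ?_ m
  · simpa using congrArg conj hBE
  · simpa using congrArg conj hl
  · simpa using (map_ne_zero conj).mpr hl₁

theorem stmt_14_general (a1 a2 θ : ℝ) (hθ1 : 0 < θ) (hθ2 : θ < Real.pi)
    (l : ℂ) (hlθ : l = Complex.exp (θ * Complex.I))
    (hl : (a1 ^ 2 : ℂ) * l = (a2 : ℂ) * (1 + l) ^ 2)
    (A D : ℝ) (B E : ℂ) (hBE : (a1 : ℂ) * l * B = (1 + l) * E)
    (β γ : ℕ → ℝ)
    (hβ : ∀ n : ℕ, 2 ≤ n →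
      (β n : ℂ) = (A : ℂ) + B * l ^ n + (starRingEnd ℂ) B * ((starRingEnd ℂ) l) ^ n)
    (hγ : ∀ n : ℕ, 2 ≤ n →
      (γ n : ℂ) = (D : ℂ) + E * l ^ n + (starRingEnd ℂ) E * ((starRingEnd ℂ) l) ^ n) :
    ∀ n, 4 ≤ n →
      a1 * (γ (n - 2) - γ (n - 1)) = a2 * (β (n - 2) - β n) ∧
      γ n - γ (n - 2) = a1 * (β n - β (n - 1)) := by
  have hl₁ : 1 + l ≠ 0 := hlθ ▸ one_add_exp_ofReal_mul_I_ne_zero hθ1 hθ2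
  rintro n hn
  obtain ⟨m, rfl⟩ : ∃ m, n = m + 4 := ⟨n - 4, by omega⟩
  rw [show m + 4 - 2 = m + 2 by omega, show m + 4 - 1 = m + 3 by omega]
  obtain ⟨h₁, h₂⟩ := mode_relations hBE hl hl₁ (m + 2)
  obtain ⟨h₁', h₂'⟩ := conj_mode_relations hBE hl hl₁ (m + 2)
  constructor
  · have : ((a1 * (γ (m + 2) - γ (m + 3)) : ℝ) : ℂ) = (a2 * (β (m + 2) - β (m + 4)) : ℝ) := by
      push_cast
      rw [hγ (m + 2) (by omega), hγ (m + 3) (by omega), hβ (m + 2) (by omega),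
        hβ (m + 4) (by omega)]
      linear_combination h₁ + h₁'
    exact_mod_cast this
  · have : ((γ (m + 4) - γ (m + 2) : ℝ) : ℂ) = (a1 * (β (m + 4) - β (m + 3)) : ℝ) := by
      push_cast
      rw [hγ (m + 4) (by omega), hγ (m + 2) (by omega), hβ (m + 4) (by omega),
        hβ (m + 3) (by omega)]
      linear_combination h₂ + h₂'
    exact_mod_cast this

theorem stmt_14 (a1 a2 θ : ℝ) (ha1 : a1 ≠ 0) (hθ1 : 0 < θ) (hθ2 : θ < Real.pi)
    (l : ℂ) (hlθ : l = Complex.exp (θ * Complex.I))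
    (hl : (a1 ^ 2 : ℂ) * l = (a2 : ℂ) * (1 + l) ^ 2)
    (A D : ℝ) (B E : ℂ) (hBE : (a1 : ℂ) * l * B = (1 + l) * E)
    (β γ : ℕ → ℝ)
    (hβ : ∀ n : ℕ, 2 ≤ n →
      (β n : ℂ) = (A : ℂ) + B * l ^ n + (starRingEnd ℂ) B * ((starRingEnd ℂ) l) ^ n)
    (hγ : ∀ n : ℕ, 2 ≤ n →
      (γ n : ℂ) = (D : ℂ) + E * l ^ n + (starRingEnd ℂ) E * ((starRingEnd ℂ) l) ^ n) :
    ∀ n, 4 ≤ n →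
      a1 * (γ (n - 2) - γ (n - 1)) = a2 * (β (n - 2) - β n) ∧
      γ n - γ (n - 2) = a1 * (β n - β (n - 1)) :=
  stmt_14_general a1 a2 θ hθ1 hθ2 l hlθ hl A D B E hBE β γ hβ hγ
end

section
/- Let {P_n}_{n≥0} be a sequence of monic real polynomials with P_0 = 1, P_1(x) = x − β_0 and x·P_n(x) = P_{n+1}(x) + β_n·P_n(x) + γ_n·P_{n−1}(x) for all n ≥ 1, with γ_n ≠ 0 for all n ≥ 1. Let a_1 be a nonzero real number and {Q_n}_{n≥0} monic polynomials with deg Q_n = n such that Q_n = P_n + a_1·P_{n−1} for all n ≥ 2. If {Q_n} satisfies a three-term recurrence x·Q_n(x) = Q_{n+1}(x) + β̃_n·Q_n(x) + γ̃_n·Q_{n−1}(x) for all n ≥ 1 with γ̃_n ≠ 0, then γ_2 + a_1·(β_1 − β_2) ≠ 0 and γ_n − γ_2 = a_1·(β_n − β_2) for all n ≥ 3. -/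
/-!
Substituting `Qₙ = Pₙ + a Pₙ₋₁` into the recurrence of `Q` and subtracting the recurrences of `P`
leaves, for `n ≥ 3`, a vanishing combination of `Pₙ, Pₙ₋₁, Pₙ₋₂`. Since `deg Pₖ = k` all three
coefficients vanish, which gives `β̃ₙ = βₙ`, `γ̃ₙ = γₙ₋₁` and `γₙ - γₙ₋₁ = a (βₙ - βₙ₋₁)`; the latter
telescopes. For `n = 2` the term `γ̃₂ Q₁` cannot be expanded, and comparing coefficients of `x²`
and `x` gives `γ₂ + a (β₁ - β₂) = γ̃₂ · lc Q₁ ≠ 0`.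
-/

open Polynomial

namespace Polynomial

variable {R : Type*}

theorem Monic.eq_zero_of_C_mul_add_eq_zero [Semiring R] {p q : R[X]} {a : R} (hp : p.Monic)
    (hq : q.natDegree < p.natDegree) (h : C a * p + q = 0) : a = 0 ∧ q = 0 := by
  have ha : a = 0 := by
    simpa [coeff_C_mul, hp.coeff_natDegree, coeff_eq_zero_of_natDegree_lt hq] using
      congrArg (coeff · p.natDegree) h
  exact ⟨ha, by simpa [ha] using h⟩

theorem eq_zero_of_C_mul_add_C_mul_add_C_mul_eq_zero [Semiring R] {P : ℕ → R[X]}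
    (hmonic : ∀ n, (P n).Monic) (hdeg : ∀ n, (P n).natDegree = n) {a b c : R} {m : ℕ}
    (h : C a * P (m + 2) + C b * P (m + 1) + C c * P m = 0) : a = 0 ∧ b = 0 ∧ c = 0 := by
  have hlt (d : R) (k : ℕ) : (C d * P k).natDegree < k + 1 :=
    (natDegree_C_mul_le d (P k)).trans_lt (by rw [hdeg]; omega)
  rw [add_assoc] at h
  obtain ⟨ha, h⟩ := (hmonic _).eq_zero_of_C_mul_add_eq_zero
    (((natDegree_add_le _ _).trans_lt (max_lt (hlt b _) ((hlt c m).trans (by omega)))).trans_eq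
      (hdeg _).symm) h
  obtain ⟨hb, h⟩ := (hmonic _).eq_zero_of_C_mul_add_eq_zero ((hlt c m).trans_eq (hdeg _).symm) h
  exact ⟨ha, hb, C_eq_zero.mp ((hmonic m).mul_left_eq_zero_iff.mp h)⟩

def ThreeTermRecurrence [Semiring R] (P : ℕ → R[X]) (β γ : ℕ → R) : Prop :=
  ∀ n, 1 ≤ n → X * P n = P (n + 1) + C (β n) * P n + C (γ n) * P (n - 1)

namespace ThreeTermRecurrence

variable [CommRing R] {P Q : ℕ → R[X]} {β γ βt γt : ℕ → R} {a : R}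

theorem succ (hP : ThreeTermRecurrence P β γ) (n : ℕ) :
    X * P (n + 1) = P (n + 2) + C (β (n + 1)) * P (n + 1) + C (γ (n + 1)) * P n :=
  hP (n + 1) le_add_self

theorem succ_succ (hP : ThreeTermRecurrence P β γ) (n : ℕ) :
    P (n + 2) = (X - C (β (n + 1))) * P (n + 1) - C (γ (n + 1)) * P n := by
  linear_combination -hP.succ n

theorem monic_and_natDegree [Nontrivial R] (hP : ThreeTermRecurrence P β γ) (hP0 : P 0 = 1)
    (hP1 : P 1 = X - C (β 0)) (n : ℕ) : (P n).Monic ∧ (P n).natDegree = n := by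
  suffices key : ∀ n, ((P n).Monic ∧ (P n).natDegree = n) ∧
      ((P (n + 1)).Monic ∧ (P (n + 1)).natDegree = n + 1) from (key n).1
  intro n
  induction n with
  | zero => simp [hP0, hP1, monic_X_sub_C]
  | succ n ih =>
    obtain ⟨⟨-, hdeg⟩, hmonic_succ, hdeg_succ⟩ := ih
    refine ⟨⟨hmonic_succ, hdeg_succ⟩, ?_⟩
    have hlead : ((X - C (β (n + 1))) * P (n + 1)).natDegree = n + 2 := by
      rw [(monic_X_sub_C _).natDegree_mul hmonic_succ, natDegree_X_sub_C, hdeg_succ]; ring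
    have hlow : (C (γ (n + 1)) * P n).natDegree < ((X - C (β (n + 1))) * P (n + 1)).natDegree :=
      (natDegree_C_mul_le _ _).trans_lt (by omega)
    rw [hP.succ_succ n]
    exact ⟨((monic_X_sub_C _).mul hmonic_succ).sub_of_left (degree_lt_degree hlow),
      (natDegree_sub_eq_left_of_natDegree_lt hlow).trans hlead⟩

-- `γt n • Q (n - 1) = X Q n - Q (n + 1) - βt n • Q n` at `n = m + 2`, expanded in the `P k`.
theorem C_mul_pred_eq (hP : ThreeTermRecurrence P β γ)
    (hQrec : ThreeTermRecurrence Q βt γt) (hQ : ∀ n, 2 ≤ n → Q n = P n + C a * P (n - 1))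
    (m : ℕ) :
    C (β (m + 2) - βt (m + 2)) * P (m + 2) + C (γ (m + 2) + a * (β (m + 1) - βt (m + 2))) *
      P (m + 1) + C (a * γ (m + 1)) * P m = C (γt (m + 2)) * Q (m + 1) := by
  have hQ2 : Q (m + 2) = P (m + 2) + C a * P (m + 1) := hQ (m + 2) le_add_self
  have hQ3 : Q (m + 3) = P (m + 3) + C a * P (m + 2) := hQ (m + 3) (by omega)
  simp only [map_add, map_sub, map_mul]
  linear_combination -hP.succ (m + 1) - C a * hP.succ m + hQrec.succ (m + 1) +
    (C (βt (m + 2)) - X) * hQ2 + hQ3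

variable [IsDomain R]

theorem add_mul_sub_ne_zero (hP : ThreeTermRecurrence P β γ)
    (hQrec : ThreeTermRecurrence Q βt γt) (hQ : ∀ n, 2 ≤ n → Q n = P n + C a * P (n - 1))
    (hmonic : ∀ n, (P n).Monic) (hdeg : ∀ n, (P n).natDegree = n) (hQ1 : (Q 1).natDegree = 1)
    (hγt2 : γt 2 ≠ 0) : γ 2 + a * (β 1 - β 2) ≠ 0 := by
  have h : C (β 2 - βt 2) * P 2 + C (γ 2 + a * (β 1 - βt 2)) * P 1 + C (a * γ 1) * P 0 =
      C (γt 2) * Q 1 :=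
    hP.C_mul_pred_eq hQrec hQ 0
  have top (k : ℕ) : (P k).coeff k = 1 := by simpa [hdeg] using (hmonic k).coeff_natDegree
  have above {k j : ℕ} (hj : k < j) : (P k).coeff j = 0 :=
    coeff_eq_zero_of_natDegree_lt (by rwa [hdeg])
  have hQ1_two : (Q 1).coeff 2 = 0 := coeff_eq_zero_of_natDegree_lt (by omega)
  have hQ1_one : (Q 1).coeff 1 ≠ 0 := by
    have hQ1_ne : Q 1 ≠ 0 := by rintro h0; simp [h0] at hQ1
    simpa [leadingCoeff, hQ1] using leadingCoeff_ne_zero.mpr hQ1_ne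
  have hβ : β 2 - βt 2 = 0 := by
    simpa only [coeff_add, coeff_C_mul, top, above one_lt_two, above zero_lt_two, hQ1_two,
      mul_one, mul_zero, add_zero] using congrArg (coeff · 2) h
  have hγ : γ 2 + a * (β 1 - βt 2) = γt 2 * (Q 1).coeff 1 := by
    simpa only [coeff_add, coeff_C_mul, hβ, top, above zero_lt_one, zero_mul, zero_add,
      mul_one, mul_zero, add_zero] using congrArg (coeff · 1) h
  rw [sub_eq_zero.mp hβ, hγ]
  exact mul_ne_zero hγt2 hQ1_one

theorem sub_eq_mul_sub (hP : ThreeTermRecurrence P β γ)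
    (hQrec : ThreeTermRecurrence Q βt γt) (hQ : ∀ n, 2 ≤ n → Q n = P n + C a * P (n - 1))
    (hmonic : ∀ n, (P n).Monic) (hdeg : ∀ n, (P n).natDegree = n) (ha : a ≠ 0) (m : ℕ) :
    γ (m + 3) - γ (m + 2) = a * (β (m + 3) - β (m + 2)) := by
  have h : C (β (m + 3) - βt (m + 3)) * P (m + 3) +
      C (γ (m + 3) + a * (β (m + 2) - βt (m + 3))) * P (m + 2) +
      C (a * γ (m + 2)) * P (m + 1) = C (γt (m + 3)) * Q (m + 2) :=
    hP.C_mul_pred_eq hQrec hQ (m + 1)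
  have hQ2 : Q (m + 2) = P (m + 2) + C a * P (m + 1) := hQ (m + 2) le_add_self
  have h0 : C (β (m + 3) - βt (m + 3)) * P (m + 3) +
      C (γ (m + 3) + a * (β (m + 2) - βt (m + 3)) - γt (m + 3)) * P (m + 2) +
      C (a * (γ (m + 2) - γt (m + 3))) * P (m + 1) = 0 := by
    simp only [map_add, map_sub, map_mul] at h ⊢
    linear_combination h + C (γt (m + 3)) * hQ2
  obtain ⟨hβ, hγ, hγt⟩ := eq_zero_of_C_mul_add_C_mul_add_C_mul_eq_zero hmonic hdeg h0
  linear_combination hγ - a * hβ - (mul_eq_zero.mp hγt).resolve_left ha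

end ThreeTermRecurrence

end Polynomial

theorem stmt_15_general (P Q : ℕ → Polynomial ℝ) (β γ βt γt : ℕ → ℝ) (a1 : ℝ) (ha1 : a1 ≠ 0)
    (hP0 : P 0 = 1) (hP1 : P 1 = X - C (β 0))
    (hPrec : ∀ n, 1 ≤ n → X * P n = P (n + 1) + C (β n) * P n + C (γ n) * P (n - 1))
    (hQdeg : ∀ n, (Q n).natDegree = n)
    (hQ : ∀ n, 2 ≤ n → Q n = P n + C a1 * P (n - 1))
    (hQrec : ∀ n, 1 ≤ n → X * Q n = Q (n + 1) + C (βt n) * Q n + C (γt n) * Q (n - 1))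
    (hγt : ∀ n, 1 ≤ n → γt n ≠ 0) :
    γ 2 + a1 * (β 1 - β 2) ≠ 0 ∧ ∀ n, 3 ≤ n → γ n - γ 2 = a1 * (β n - β 2) := by
  have hP : ThreeTermRecurrence P β γ := hPrec
  have hmonic n := (hP.monic_and_natDegree hP0 hP1 n).1
  have hdeg n := (hP.monic_and_natDegree hP0 hP1 n).2
  have step := hP.sub_eq_mul_sub hQrec hQ hmonic hdeg ha1
  refine ⟨hP.add_mul_sub_ne_zero hQrec hQ hmonic hdeg (hQdeg 1) (hγt 2 one_le_two),
    fun n hn ↦ ?_⟩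
  induction n, hn using Nat.le_induction with
  | base => exact step 0
  | succ n hn ih =>
    obtain ⟨m, rfl⟩ := Nat.exists_eq_add_of_le' hn
    linear_combination ih + step (m + 1)

theorem stmt_15 (P Q : ℕ → Polynomial ℝ) (β γ βt γt : ℕ → ℝ) (a1 : ℝ) (ha1 : a1 ≠ 0)
    (hPmonic : ∀ n, (P n).Monic)
    (hP0 : P 0 = 1) (hP1 : P 1 = X - C (β 0))
    (hPrec : ∀ n, 1 ≤ n → X * P n = P (n + 1) + C (β n) * P n + C (γ n) * P (n - 1))
    (hγ : ∀ n, 1 ≤ n → γ n ≠ 0)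
    (hQmonic : ∀ n, (Q n).Monic) (hQdeg : ∀ n, (Q n).natDegree = n)
    (hQ : ∀ n, 2 ≤ n → Q n = P n + C a1 * P (n - 1))
    (hQrec : ∀ n, 1 ≤ n → X * Q n = Q (n + 1) + C (βt n) * Q n + C (γt n) * Q (n - 1))
    (hγt : ∀ n, 1 ≤ n → γt n ≠ 0) :
    γ 2 + a1 * (β 1 - β 2) ≠ 0 ∧ ∀ n, 3 ≤ n → γ n - γ 2 = a1 * (β n - β 2) :=
  stmt_15_general P Q β γ βt γt a1 ha1 hP0 hP1 hPrec hQdeg hQ hQrec hγt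
end

section
/- Let {P_n}_{n≥0} be a sequence of monic real polynomials with P_0 = 1, P_1(x) = x − β_0 and x·P_n(x) = P_{n+1}(x) + β_n·P_n(x) + γ_n·P_{n−1}(x) for all n ≥ 1, with γ_n ≠ 0 for all n ≥ 1. Let a_1 be a nonzero real number and assume γ_n − γ_2 = a_1·(β_n − β_2) for all n ≥ 3. Set Q_m = P_m + a_1·P_{m−1} for m ≥ 2. Then for every n ≥ 3: x·Q_n(x) = Q_{n+1}(x) + β_n·Q_n(x) + γ_{n−1}·Q_{n−1}(x), and the coefficient γ_{n−1} is nonzero. -/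
open Polynomial

theorem X_mul_add_C_mul_pred {R : Type*} [CommRing R] {P : ℕ → R[X]} {β γ : ℕ → R}
    (hP : ∀ n, 1 ≤ n → X * P n = P (n + 1) + C (β n) * P n + C (γ n) * P (n - 1))
    (a : R) {n : ℕ} (hn : 2 ≤ n) (hγ : γ n = γ (n - 1) + a * (β n - β (n - 1))) :
    X * (P n + C a * P (n - 1)) = (P (n + 1) + C a * P n)
      + C (β n) * (P n + C a * P (n - 1)) + C (γ (n - 1)) * (P (n - 1) + C a * P (n - 1 - 1)) := by
  have hPn := hP n (by omega)
  have hPpred := hP (n - 1) (by omega)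
  rw [Nat.sub_add_cancel (by omega : 1 ≤ n)] at hPpred
  rw [hγ] at hPn
  simp only [C_add, C_mul, C_sub] at hPn
  linear_combination hPn + C a * hPpred

theorem stmt_16_general (P Q : ℕ → Polynomial ℝ) (β γ : ℕ → ℝ) (a1 : ℝ)
    (hPrec : ∀ n, 1 ≤ n → X * P n = P (n + 1) + C (β n) * P n + C (γ n) * P (n - 1))
    (hγ : ∀ n, 1 ≤ n → γ n ≠ 0)
    (hcond : ∀ n, 3 ≤ n → γ n - γ 2 = a1 * (β n - β 2))
    (hQ : ∀ m, 2 ≤ m → Q m = P m + C a1 * P (m - 1)) :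
    ∀ n, 3 ≤ n →
      X * Q n = Q (n + 1) + C (β n) * Q n + C (γ (n - 1)) * Q (n - 1) ∧ γ (n - 1) ≠ 0 := by
  intro n hn
  have hstep : γ n = γ (n - 1) + a1 * (β n - β (n - 1)) := by
    have hprev : γ (n - 1) - γ 2 = a1 * (β (n - 1) - β 2) := by
      rcases (show n - 1 = 2 ∨ 3 ≤ n - 1 by omega) with h | h
      · rw [h]; ring
      · exact hcond _ h
    linear_combination hcond n hn - hprev
  refine ⟨?_, hγ _ (by omega)⟩
  rw [hQ n (by omega), hQ (n + 1) (by omega), hQ (n - 1) (by omega), Nat.add_sub_cancel]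
  exact X_mul_add_C_mul_pred hPrec a1 (by omega) hstep

theorem stmt_16 (P Q : ℕ → Polynomial ℝ) (β γ : ℕ → ℝ) (a1 : ℝ) (ha1 : a1 ≠ 0)
    (hPmonic : ∀ n, (P n).Monic)
    (hP0 : P 0 = 1) (hP1 : P 1 = X - C (β 0))
    (hPrec : ∀ n, 1 ≤ n → X * P n = P (n + 1) + C (β n) * P n + C (γ n) * P (n - 1))
    (hγ : ∀ n, 1 ≤ n → γ n ≠ 0)
    (hcond : ∀ n, 3 ≤ n → γ n - γ 2 = a1 * (β n - β 2))
    (hQ : ∀ m, 2 ≤ m → Q m = P m + C a1 * P (m - 1)) :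
    ∀ n, 3 ≤ n →
      X * Q n = Q (n + 1) + C (β n) * Q n + C (γ (n - 1)) * Q (n - 1) ∧ γ (n - 1) ≠ 0 :=
  stmt_16_general P Q β γ a1 hPrec hγ hcond hQ
end

section
/- Let {P_n}_{n≥0} be a sequence of monic real polynomials with P_0 = 1, P_1(x) = x and x·P_n(x) = P_{n+1}(x) + γ_n·P_{n−1}(x) for all n ≥ 1 (i.e., a symmetric monic orthogonal polynomial sequence, with all β_n = 0), with γ_n ≠ 0 for all n ≥ 1. Let a_1 be a nonzero real number and {Q_n}_{n≥0} monic polynomials with deg Q_n = n such that Q_n = P_n + a_1·P_{n−1} for all n ≥ 2. If {Q_n} satisfies a three-term recurrence x·Q_n(x) = Q_{n+1}(x) + β̃_n·Q_n(x) + γ̃_n·Q_{n−1}(x) for all n ≥ 1 with γ̃_n ≠ 0, then γ_n = γ_2 for all n ≥ 2. -/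
/-!
For `n ≥ 3`, substitute `Q k = P k + a₁ P (k - 1)` into the recurrence of `Q` at `n` and expand
`X * P` by the recurrence of `P`: what remains is
`β̃ₙ Pₙ + (a₁ β̃ₙ + γ̃ₙ - γₙ) Pₙ₋₁ + a₁ (γ̃ₙ - γₙ₋₁) Pₙ₋₂ = 0`.
As `Pₖ` is monic of degree `k`, all three coefficients vanish, hence `γₙ = γ̃ₙ = γₙ₋₁`.
-/

open Polynomial

section ThreeTerm

variable {R : Type*} [CommRing R] [Nontrivial R]

lemma monic_natDegree_X_mul_sub_C_mul {p q : R[X]} {n : ℕ} (hp : p.Monic)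
    (hpn : p.natDegree = n + 1) (hqn : q.natDegree ≤ n) (c : R) :
    (X * p - C c * q).Monic ∧ (X * p - C c * q).natDegree = n + 2 := by
  have hXp : (X * p).natDegree = n + 2 := by rw [natDegree_X_mul hp.ne_zero, hpn]
  have hlt : (C c * q).natDegree < (X * p).natDegree := by
    rw [hXp]; exact (natDegree_C_mul_le c q).trans_lt (by omega)
  refine ⟨(monic_X.mul hp).sub_of_left (degree_lt_degree hlt), ?_⟩
  rw [natDegree_sub_eq_left_of_natDegree_lt hlt, hXp]

variable {P : ℕ → R[X]} {γ : ℕ → R}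

lemma monic_natDegree_of_threeTerm (hP0 : P 0 = 1) (hP1 : P 1 = X)
    (hrec : ∀ n, 1 ≤ n → X * P n = P (n + 1) + C (γ n) * P (n - 1)) (n : ℕ) :
    (P n).Monic ∧ (P n).natDegree = n := by
  induction n using Nat.strong_induction_on with
  | _ n ih =>
    match n, ih with
    | 0, _ => simp [hP0]
    | 1, _ => simp [hP1]
    | k + 2, ih =>
      have hP : P (k + 2) = X * P (k + 1) - C (γ (k + 1)) * P k := by
        rw [hrec (k + 1) le_add_self, Nat.add_sub_cancel]; ring
      rw [hP]
      exact monic_natDegree_X_mul_sub_C_mul (ih (k + 1) (by omega)).1 (ih (k + 1) (by omega)).2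
        (ih k (by omega)).2.le _

end ThreeTerm

lemma eq_zero_of_C_mul_add_C_mul_add_C_mul {R : Type*} [CommRing R] {p q r : R[X]} {n : ℕ}
    (hp : p.Monic) (hpn : p.natDegree = n + 2) (hq : q.Monic) (hqn : q.natDegree = n + 1)
    (hr : r.Monic) (hrn : r.natDegree = n) {a b c : R} (h : C a * p + C b * q + C c * r = 0) :
    a = 0 ∧ b = 0 ∧ c = 0 := by
  have hcoeff (k : ℕ) : a * p.coeff k + b * q.coeff k + c * r.coeff k = 0 := by
    simpa only [coeff_add, coeff_C_mul, coeff_zero] using congrArg (coeff · k) h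
  have hlead {s : R[X]} (hs : s.Monic) {m : ℕ} (hsm : s.natDegree = m) : s.coeff m = 1 := by
    rw [← hsm, hs.coeff_natDegree]
  have hvanish {s : R[X]} {m k : ℕ} (hsm : s.natDegree = m) (hk : m < k) : s.coeff k = 0 :=
    coeff_eq_zero_of_natDegree_lt (hsm ▸ hk)
  have ha : a = 0 := by
    simpa [hlead hp hpn, hvanish hqn (by omega : n + 1 < n + 2),
      hvanish hrn (by omega : n < n + 2)] using hcoeff (n + 2)
  have hb : b = 0 := by
    simpa [ha, hlead hq hqn, hvanish hrn (by omega : n < n + 1)] using hcoeff (n + 1)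
  have hc : c = 0 := by simpa [ha, hb, hlead hr hrn] using hcoeff n
  exact ⟨ha, hb, hc⟩

section Perturbation

variable {R : Type*} [CommRing R] [IsDomain R] {P Q : ℕ → R[X]} {γ βt γt : ℕ → R} {a : R}

lemma threeTerm_coeff_succ_eq_of_perturbation (ha : a ≠ 0) (hP0 : P 0 = 1) (hP1 : P 1 = X)
    (hPrec : ∀ n, 1 ≤ n → X * P n = P (n + 1) + C (γ n) * P (n - 1))
    (hQ : ∀ n, 2 ≤ n → Q n = P n + C a * P (n - 1))
    (hQrec : ∀ n, 1 ≤ n → X * Q n = Q (n + 1) + C (βt n) * Q n + C (γt n) * Q (n - 1))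
    (n : ℕ) (hn : 2 ≤ n) : γ (n + 1) = γ n := by
  obtain ⟨m, rfl⟩ := Nat.exists_eq_add_of_le' hn
  have hPdeg := monic_natDegree_of_threeTerm hP0 hP1 hPrec
  have hPrec' (k : ℕ) : X * P (k + 1) = P (k + 2) + C (γ (k + 1)) * P k :=
    hPrec (k + 1) le_add_self
  have hQ' (k : ℕ) : Q (k + 3) = P (k + 3) + C a * P (k + 2) := hQ (k + 3) (by omega)
  have hcomb : C (βt (m + 3)) * P (m + 3)
      + C (βt (m + 3) * a + γt (m + 3) - γ (m + 3)) * P (m + 2)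
      + C (a * (γt (m + 3) - γ (m + 2))) * P (m + 1) = 0 := by
    have hQrec' := hQrec (m + 3) le_add_self
    rw [show m + 3 - 1 = m + 2 from rfl, show m + 3 + 1 = m + 4 from rfl, hQ' (m + 1), hQ' m,
      hQ (m + 2) le_add_self, show m + 2 - 1 = m + 1 from rfl] at hQrec'
    simp only [map_add, map_sub, map_mul]
    linear_combination -hQrec' + hPrec' (m + 2) + C a * hPrec' (m + 1)
  obtain ⟨hβt, hγt, hγ⟩ := eq_zero_of_C_mul_add_C_mul_add_C_mul (hPdeg _).1 (hPdeg _).2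
    (hPdeg _).1 (hPdeg _).2 (hPdeg _).1 (hPdeg (m + 1)).2 hcomb
  rw [hβt, zero_mul, zero_add, sub_eq_zero] at hγt
  rw [mul_eq_zero, sub_eq_zero] at hγ
  exact hγt.symm.trans (hγ.resolve_left ha)

end Perturbation

theorem stmt_17_general (P Q : ℕ → Polynomial ℝ) (γ βt γt : ℕ → ℝ) (a1 : ℝ) (ha1 : a1 ≠ 0)
    (hP0 : P 0 = 1) (hP1 : P 1 = X)
    (hPrec : ∀ n, 1 ≤ n → X * P n = P (n + 1) + C (γ n) * P (n - 1))
    (hQ : ∀ n, 2 ≤ n → Q n = P n + C a1 * P (n - 1))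
    (hQrec : ∀ n, 1 ≤ n → X * Q n = Q (n + 1) + C (βt n) * Q n + C (γt n) * Q (n - 1)) :
    ∀ n, 2 ≤ n → γ n = γ 2 := by
  intro n hn
  induction n, hn using Nat.le_induction with
  | base => rfl
  | succ n hn ih =>
    rw [threeTerm_coeff_succ_eq_of_perturbation ha1 hP0 hP1 hPrec hQ hQrec n hn, ih]

theorem stmt_17 (P Q : ℕ → Polynomial ℝ) (γ βt γt : ℕ → ℝ) (a1 : ℝ) (ha1 : a1 ≠ 0)
    (hPmonic : ∀ n, (P n).Monic)
    (hP0 : P 0 = 1) (hP1 : P 1 = X)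
    (hPrec : ∀ n, 1 ≤ n → X * P n = P (n + 1) + C (γ n) * P (n - 1))
    (hγ : ∀ n, 1 ≤ n → γ n ≠ 0)
    (hQmonic : ∀ n, (Q n).Monic) (hQdeg : ∀ n, (Q n).natDegree = n)
    (hQ : ∀ n, 2 ≤ n → Q n = P n + C a1 * P (n - 1))
    (hQrec : ∀ n, 1 ≤ n → X * Q n = Q (n + 1) + C (βt n) * Q n + C (γt n) * Q (n - 1))
    (hγt : ∀ n, 1 ≤ n → γt n ≠ 0) :
    ∀ n, 2 ≤ n → γ n = γ 2 :=
  stmt_17_general P Q γ βt γt a1 ha1 hP0 hP1 hPrec hQ hQrec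
end
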